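/- arXiv:2112.09041 — 6 statements merged into one kernel-verified Lean document; each statement's English description precedes it below -/
import Mathlib

section
/- Suppose 𝒥 is a compact, connected, locally connected metric space, f : 𝒥 → 𝒥 is a surjective covering map, and 𝒰₀ is a finite cover of 𝒥 by open connected sets such that (f, 𝒰₀) satisfies Axiom [Expansion]. Then the following two axioms also hold. (Degree) For each n ∈ ℕ there is a bound D_n such that for every U ∈ 𝒰₀, every Ũ ∈ 𝒰_n with fⁿ(Ũ) ⊆ U, and every y ∈ U, the fiber { z ∈ Ũ : fⁿ(z) = y } has at most D_n elements. (Irreducibility) For every nonempty open set W ⊆ 𝒥 there is an integer N with f^N(W) = 𝒥. -/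
open Set Filter

noncomputable section

/-- The sequence of covers generated from `U₀` by taking connected components of preimages
under `f`: `𝒰₀ = U₀`, and `𝒰_{n+1}` consists of the connected components of `f⁻¹(U)`
for `U ∈ 𝒰_n`. -/
def iterCover {J : Type*} [TopologicalSpace J] (f : J → J) (U0 : Set (Set J)) : ℕ → Set (Set J)
  | 0 => U0
  | (n + 1) => {V | ∃ U ∈ iterCover f U0 n, ∃ x ∈ f ⁻¹' U, V = connectedComponentIn (f ⁻¹' U) x}

/-- The mesh of a collection of subsets of a metric space: the supremum of the diameters of
its members. -/
def mesh {J : Type*} [PseudoEMetricSpace J] (C : Set (Set J)) : ENNReal :=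
  ⨆ V ∈ C, EMetric.diam V

/-- `U₀` is a finite cover by nonempty open connected sets. -/
def GoodCover {J : Type*} [TopologicalSpace J] (U0 : Set (Set J)) : Prop :=
  U0.Finite ∧ (∀ U ∈ U0, IsOpen U ∧ IsConnected U) ∧ ⋃₀ U0 = Set.univ

/-- Axiom [Expansion]: the mesh of the iterated covers tends to 0. -/
def ExpansionAxiom {J : Type*} [PseudoEMetricSpace J] (f : J → J) (U0 : Set (Set J)) : Prop :=
  Tendsto (fun n => mesh (iterCover f U0 n)) atTop (nhds 0)

/-- Axiom [Degree]: for each `n` there is a uniform bound on the cardinality of fibers of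
`f^n : Ũ → U` for `U ∈ 𝒰₀` and `Ũ ∈ 𝒰_n` with `f^n(Ũ) ⊆ U`. -/
def DegreeAxiom {J : Type*} [TopologicalSpace J] (f : J → J) (U0 : Set (Set J)) : Prop :=
  ∀ n : ℕ, ∃ D : ℕ, ∀ U ∈ U0, ∀ V ∈ iterCover f U0 n, f^[n] '' V ⊆ U →
    ∀ y ∈ U, ({z ∈ V | f^[n] z = y}).encard ≤ D

/-- Axiom [Irreducibility]: every nonempty open set eventually covers the whole space. -/
def IrreducibilityAxiom {J : Type*} [TopologicalSpace J] (f : J → J) : Prop :=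
  ∀ W : Set J, IsOpen W → W.Nonempty → ∃ N : ℕ, f^[N] '' W = Set.univ

/-! `f^[n]` is a local homeomorphism of a compact space, so a finite cover by open sets on which
it is injective bounds the size of its fibres uniformly: this gives [Degree].

For [Irreducibility], a covering map admits connected lifts of small connected sets through any
point above them, so the image of a component of `f ⁻¹' U` is open and relatively closed in `U`,
hence is all of `U`. Applied to the covering map `f^[n]`, this means every `U ∈ 𝒰₀` is the image of
a member of `𝒰ₙ` through any given point above `U`. Chaining overlapping members of the finite
cover `𝒰₀` of the connected space, every `y` has an `f^[n]`-preimage within `K * mesh 𝒰ₙ` of any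
given `x`, with `K` independent of `n`; by [Expansion] this is eventually smaller than the radius
of a ball in `W`. -/

theorem connectedComponentIn_preimage_connectedComponentIn {α β : Type*} [TopologicalSpace α]
    [TopologicalSpace β] {f : α → β} (hf : Continuous f) {s : Set β} {x : α} (hx : f x ∈ s) :
    connectedComponentIn (f ⁻¹' connectedComponentIn s (f x)) x =
      connectedComponentIn (f ⁻¹' s) x := by
  have hx' : x ∈ f ⁻¹' s := hx
  refine (connectedComponentIn_mono x (preimage_mono (connectedComponentIn_subset _ _))).antisymm ?_
  have hmaps := hf.continuousOn.mapsTo_connectedComponentIn hx'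
  exact isPreconnected_connectedComponentIn.subset_connectedComponentIn
    (mem_connectedComponentIn hx')
    fun z hz => connectedComponentIn_mono _ (image_preimage_subset f s) (hmaps hz)

section CoveringMaps

variable {E X : Type*} [TopologicalSpace E] {f : E → X}

theorem IsLocallyInjective.exists_encard_fiber_le [CompactSpace E] (hf : IsLocallyInjective f) :
    ∃ D : ℕ, ∀ x, (f ⁻¹' {x}).encard ≤ D := by
  choose V hVo hmem hinj using hf
  obtain ⟨t, ht⟩ := isCompact_univ.elim_finite_subcover V hVo fun e _ => mem_iUnion.2 ⟨e, hmem e⟩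
  refine ⟨t.card, fun x => ?_⟩
  have hcov : ∀ e, ∃ i ∈ t, e ∈ V i := fun e => by simpa using ht (mem_univ e)
  choose i hit hei using hcov
  calc (f ⁻¹' {x}).encard ≤ (t : Set E).encard :=
        encard_le_encard_of_injOn (fun e _ => hit e) fun e he e' he' h =>
          hinj (i e) (hei e) (h ▸ hei e') (he.trans he'.symm)
    _ = t.card := encard_coe_eq_coe_finsetCard t

variable [TopologicalSpace X]

theorem IsCoveringMap.exists_open_preconnected_lifts (hf : IsCoveringMap f) (x : X) :
    ∃ W, IsOpen W ∧ x ∈ W ∧ ∀ N ⊆ W, IsPreconnected N → ∀ e, f e ∈ N →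
      ∃ S, e ∈ S ∧ IsPreconnected S ∧ f '' S = N := by
  by_cases hx : (f ⁻¹' {x}).Nonempty
  · have := hx.to_subtype
    set t := (hf x).toTrivialization
    refine ⟨t.baseSet, t.open_baseSet, (hf x).mem_toTrivialization_baseSet,
      fun N hNW hN e he => ?_⟩
    have hsub : N ×ˢ {(t e).2} ⊆ t.target := fun p hp => t.mem_target.2 (hNW hp.1)
    refine ⟨t.toOpenPartialHomeomorph.symm '' (N ×ˢ {(t e).2}),
      ⟨(f e, (t e).2), ⟨he, rfl⟩, t.symm_apply_mk_proj (t.mem_source.2 (hNW he))⟩,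
      (hN.prod isPreconnected_singleton).image _
        (t.toOpenPartialHomeomorph.continuousOn_symm.mono hsub), ?_⟩
    rw [image_image, EqOn.image_eq (fun p hp => t.proj_symm_apply (hsub hp)),
      fst_image_prod _ (singleton_nonempty _)]
  · -- an evenly covered neighbourhood of a point with empty fibre has empty preimage
    obtain ⟨-, W, hxW, hWo, -, H, -⟩ := hf x
    exact ⟨W, hWo, hxW, fun N hNW _ e he => (hx ⟨_, (H ⟨e, hNW he⟩).2.2⟩).elim⟩

theorem IsCoveringMap.image_connectedComponentIn_preimage [LocallyConnectedSpace E]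
    [LocallyConnectedSpace X] (hf : IsCoveringMap f) {U : Set X} (hUo : IsOpen U)
    (hU : IsPreconnected U) {e : E} (he : f e ∈ U) :
    f '' connectedComponentIn (f ⁻¹' U) e = U := by
  refine (image_subset_iff.2 (connectedComponentIn_subset _ _)).antisymm ?_
  refine hU.subset_of_closure_inter_subset
    (hf.isOpenMap _ (hUo.preimage hf.continuous).connectedComponentIn)
    ⟨f e, he, mem_image_of_mem f (mem_connectedComponentIn he)⟩ ?_
  rintro u ⟨hu, huU⟩
  obtain ⟨W, hWo, huW, hlift⟩ := hf.exists_open_preconnected_lifts u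
  set N := connectedComponentIn (W ∩ U) u
  obtain ⟨_, hvN, v, hvC, rfl⟩ := mem_closure_iff.1 hu N (hWo.inter hUo).connectedComponentIn
    (mem_connectedComponentIn ⟨huW, huU⟩)
  obtain ⟨S, hvS, hS, hSN⟩ := hlift N ((connectedComponentIn_subset _ _).trans inter_subset_left)
    isPreconnected_connectedComponentIn v hvN
  have hSU : S ⊆ f ⁻¹' U := fun s hs =>
    (connectedComponentIn_subset _ _ (hSN ▸ mem_image_of_mem f hs)).2
  have hSC : S ⊆ connectedComponentIn (f ⁻¹' U) e :=
    connectedComponentIn_eq hvC ▸ hS.subset_connectedComponentIn hvS hSU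
  exact image_mono hSC (hSN ▸ mem_connectedComponentIn ⟨huW, huU⟩)

end CoveringMaps

section Iterates

variable {E : Type*} [TopologicalSpace E] {f : E → E}

theorem IsLocalHomeomorph.iterate (hf : IsLocalHomeomorph f) (n : ℕ) :
    IsLocalHomeomorph f^[n] := by
  induction n with
  | zero => exact (Homeomorph.refl E).isLocalHomeomorph
  | succ n ih => rw [Function.iterate_succ']; exact hf.comp ih

/-- Covering maps need not compose, but on a compact Hausdorff space local homeomorphisms are
covering maps. -/
theorem IsCoveringMap.iterate [T2Space E] [CompactSpace E] (hf : IsCoveringMap f) (n : ℕ) :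
    IsCoveringMap f^[n] :=
  isLocalHomeomorph_iff_isCoveringMap.1 (hf.isLocalHomeomorph.iterate n)

theorem connectedComponentIn_preimage_iterate_mem_iterCover {U0 : Set (Set E)} (hf : Continuous f)
    (hU0 : ∀ U ∈ U0, IsPreconnected U) {U : Set E} (hU : U ∈ U0) (n : ℕ) {z : E}
    (hz : f^[n] z ∈ U) : connectedComponentIn (f^[n] ⁻¹' U) z ∈ iterCover f U0 n := by
  induction n generalizing z with
  | zero =>
    rw [Function.iterate_zero, preimage_id, (hU0 U hU).connectedComponentIn (x := z) hz]
    exact hU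
  | succ n ih =>
    rw [Function.iterate_succ, preimage_comp,
      ← connectedComponentIn_preimage_connectedComponentIn hf hz]
    exact ⟨_, ih hz, z, mem_connectedComponentIn hz, rfl⟩

end Iterates

theorem edist_le_mesh {J : Type*} [PseudoEMetricSpace J] {C : Set (Set J)} {V : Set J}
    (hV : V ∈ C) {z w : J} (hz : z ∈ V) (hw : w ∈ V) : edist z w ≤ mesh C :=
  (Metric.edist_le_ediam_of_mem hz hw).trans (le_iSup₂_of_le V hV le_rfl)

section Metric

variable {J : Type*} [EMetricSpace J] [CompactSpace J] [LocallyConnectedSpace J] {f : J → J}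
  {U0 : Set (Set J)}

theorem IsCoveringMap.exists_iterate_eq_edist_le_mesh (hf : IsCoveringMap f)
    (hU0 : ∀ U ∈ U0, IsOpen U ∧ IsConnected U) {U : Set J} (hU : U ∈ U0) (n : ℕ) {z y : J}
    (hz : f^[n] z ∈ U) (hy : y ∈ U) :
    ∃ w, f^[n] w = y ∧ edist z w ≤ mesh (iterCover f U0 n) := by
  rw [← (hf.iterate n).image_connectedComponentIn_preimage (hU0 U hU).1
    (hU0 U hU).2.isPreconnected hz] at hy
  obtain ⟨w, hw, rfl⟩ := hy
  exact ⟨w, rfl, edist_le_mesh (connectedComponentIn_preimage_iterate_mem_iterCover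
    hf.continuous (fun U hU => (hU0 U hU).2.isPreconnected) hU n hz)
    (mem_connectedComponentIn hz) hw⟩

theorem IsCoveringMap.exists_iterate_eq_edist_le_mul_mesh_of_reflTransGen (hf : IsCoveringMap f)
    (hU0 : ∀ U ∈ U0, IsOpen U ∧ IsConnected U) {A B : U0}
    (hAB : Relation.ReflTransGen (fun A B : U0 => ((A : Set J) ∩ B).Nonempty) A B) :
    ∃ k : ℕ, ∀ n z, f^[n] z ∈ (A : Set J) → ∀ y ∈ (B : Set J),
      ∃ w, f^[n] w = y ∧ edist z w ≤ k * mesh (iterCover f U0 n) := by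
  induction hAB with
  | refl =>
    exact ⟨1, fun n z hz y hy => by
      simpa using hf.exists_iterate_eq_edist_le_mesh hU0 A.2 n hz hy⟩
  | @tail B C _ hBC ih =>
    obtain ⟨k, hk⟩ := ih
    obtain ⟨b, hbB, hbC⟩ := hBC
    refine ⟨k + 1, fun n z hz y hy => ?_⟩
    obtain ⟨w₁, hw₁, hzw₁⟩ := hk n z hz b hbB
    obtain ⟨w, hw, hw₁w⟩ := hf.exists_iterate_eq_edist_le_mesh hU0 C.2 n (hw₁ ▸ hbC) hy
    refine ⟨w, hw, ?_⟩
    calc edist z w ≤ edist z w₁ + edist w₁ w := edist_triangle _ _ _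
      _ ≤ k * mesh (iterCover f U0 n) + mesh (iterCover f U0 n) := add_le_add hzw₁ hw₁w
      _ = ↑(k + 1) * mesh (iterCover f U0 n) := by push_cast; ring

theorem IsCoveringMap.exists_iterate_eq_edist_le_mul_mesh [ConnectedSpace J]
    (hf : IsCoveringMap f) (hfin : U0.Finite) (hU0 : ∀ U ∈ U0, IsOpen U ∧ IsConnected U)
    (hcover : ⋃₀ U0 = univ) :
    ∃ K : ℕ, ∀ n (z y : J), ∃ w, f^[n] w = y ∧ edist z w ≤ K * mesh (iterCover f U0 n) := by
  have : Finite U0 := hfin.to_subtype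
  have hunion : IsPreconnected (⋃ A : U0, (A : Set J)) := by
    rw [← sUnion_eq_iUnion, hcover]; exact isPreconnected_univ
  have hchain (A B : U0) : ∀ᶠ K : ℕ in atTop, ∀ n z, f^[n] z ∈ (A : Set J) → ∀ y ∈ (B : Set J),
      ∃ w, f^[n] w = y ∧ edist z w ≤ K * mesh (iterCover f U0 n) := by
    obtain ⟨k, hk⟩ := hf.exists_iterate_eq_edist_le_mul_mesh_of_reflTransGen hU0
      (hunion.transGen_of_iUnion (fun A => (hU0 A A.2).1) A B (hU0 A A.2).2.nonempty
        (hU0 B B.2).2.nonempty).to_reflTransGen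
    filter_upwards [eventually_ge_atTop k] with K hK n z hz y hy
    obtain ⟨w, hw, hzw⟩ := hk n z hz y hy
    exact ⟨w, hw, hzw.trans (by gcongr)⟩
  obtain ⟨K, hK⟩ := (eventually_all.2 fun A => eventually_all.2 (hchain A)).exists
  refine ⟨K, fun n z y => ?_⟩
  obtain ⟨A, hA, hzA⟩ := mem_sUnion.1 (hcover ▸ mem_univ (f^[n] z))
  obtain ⟨B, hB, hyB⟩ := mem_sUnion.1 (hcover ▸ mem_univ y)
  exact hK ⟨A, hA⟩ ⟨B, hB⟩ n z hzA y hyB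

end Metric

theorem degree_and_irreducibility_of_expansion_general
    {J : Type*} [MetricSpace J] [CompactSpace J] [ConnectedSpace J] [LocallyConnectedSpace J]
    (f : J → J) (hcov : IsCoveringMap f)
    (U0 : Set (Set J)) (hU0 : GoodCover U0) (hexp : ExpansionAxiom f U0) :
    DegreeAxiom f U0 ∧ IrreducibilityAxiom f := by
  obtain ⟨hfin, hopen, hcover⟩ := hU0
  refine ⟨fun n => ?_, fun W hW ⟨x, hx⟩ => ?_⟩
  · obtain ⟨D, hD⟩ := (hcov.isLocalHomeomorph.iterate n).isLocallyInjective.exists_encard_fiber_le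
    exact ⟨D, fun U _ V _ _ y _ => (encard_le_encard fun z hz => hz.2).trans (hD y)⟩
  · obtain ⟨K, hK⟩ := hcov.exists_iterate_eq_edist_le_mul_mesh hfin hopen hcover
    obtain ⟨ε, hε, hball⟩ := EMetric.isOpen_iff.1 hW x hx
    have hshrink : Tendsto (fun n => (K : ENNReal) * mesh (iterCover f U0 n)) atTop (nhds 0) := by
      simpa using ENNReal.Tendsto.const_mul hexp (Or.inr (ENNReal.natCast_ne_top K))
    obtain ⟨n, hn⟩ := (hshrink.eventually_lt_const hε).exists
    refine ⟨n, eq_univ_of_forall fun y => ?_⟩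
    obtain ⟨w, hwy, hxw⟩ := hK n x y
    exact ⟨w, hball (by rw [Metric.mem_eball, edist_comm]; exact hxw.trans_lt hn), hwy⟩

/-- if `𝒥` is a compact, connected, locally connected metric space,
`f : 𝒥 → 𝒥` a surjective covering map, and `𝒰₀` a finite cover by open connected sets such
that `(f, 𝒰₀)` satisfies Axiom [Expansion], then Axioms [Degree] and [Irreducibility] hold. -/
theorem degree_and_irreducibility_of_expansion
    {J : Type*} [MetricSpace J] [CompactSpace J] [ConnectedSpace J] [LocallyConnectedSpace J]
    (f : J → J) (hcov : IsCoveringMap f) (hsurj : Function.Surjective f)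
    (U0 : Set (Set J)) (hU0 : GoodCover U0) (hexp : ExpansionAxiom f U0) :
    DegreeAxiom f U0 ∧ IrreducibilityAxiom f :=
  degree_and_irreducibility_of_expansion_general f hcov U0 hU0 hexp

end
end

section
/- Let X be a compact, connected metric space homeomorphic to a finite CW complex whose metric is geodesic (any two points are joined by a continuous path whose length equals their distance), and let sys(X), the systole of X, be the infimum of the lengths of loops in X that are not null-homotopic. Let p : X̃ → X be a covering map and equip X̃ with a lifted metric d̃ (an intrinsic metric inducing the covering-space topology for which p preserves lengths of paths). Then for every r < sys(X)/4 and every x̃ ∈ X̃ with p(x̃) = x, the restriction of p to the open ball B(x̃, r) is an isometry onto the open ball B(x, r): it maps B(x̃, r) bijectively onto B(x, r) and d(p(ã), p(b̃)) = d̃(ã, b̃) for all ã, b̃ ∈ B(x̃, r). -/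
open Set Filter unitInterval

noncomputable section

/-- The length (total variation) of a path in an extended metric space, valued in `ℝ≥0∞`. -/
def pathELength {X : Type*} [PseudoEMetricSpace X] (γ : unitInterval → X) : ENNReal :=
  eVariationOn γ Set.univ

/-- A metric is intrinsic (a length metric) if the distance between any two points is the
infimum of the lengths of continuous paths joining them. -/
def IsLengthMetric (X : Type*) [MetricSpace X] : Prop :=
  ∀ x y : X, edist x y = ⨅ γ : Path x y, pathELength (fun t => γ t)

/-- A metric is geodesic if any two points are joined by a path whose length equals their
distance. -/
def IsGeodesicMetric (X : Type*) [MetricSpace X] : Prop :=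
  ∀ x y : X, ∃ γ : Path x y, pathELength (fun t => γ t) = edist x y

/-- `p` preserves lengths of (continuous) paths. -/
def PreservesPathLength {E X : Type*} [MetricSpace E] [MetricSpace X] (p : E → X) : Prop :=
  ∀ γ : unitInterval → E, Continuous γ → pathELength (p ∘ γ) = pathELength γ

/-- The metric on the total space of a covering map `p` is a lifted metric if it is intrinsic
and `p` preserves lengths of paths (its topology is the metric topology). -/
def IsLiftedMetric {E X : Type*} [MetricSpace E] [MetricSpace X] (p : E → X) : Prop :=
  IsLengthMetric E ∧ PreservesPathLength p

/-- The closed unit ball in `ℝⁿ`, the model for an `n`-cell. -/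
def unitClosedBall (n : ℕ) : Set (EuclideanSpace ℝ (Fin n)) :=
  Metric.closedBall 0 1

/-- The open part (interior) of the model `n`-cell. -/
def openPart {n : ℕ} : Set (unitClosedBall n) :=
  {y | ‖(y : EuclideanSpace ℝ (Fin n))‖ < 1}

/-- The boundary sphere of the model `n`-cell. -/
def spherePart {n : ℕ} : Set (unitClosedBall n) :=
  {y | ‖(y : EuclideanSpace ℝ (Fin n))‖ = 1}

/-- `X` is (homeomorphic to) a finite CW complex: `X` is Hausdorff and admits finitely many
characteristic maps of cells whose open cells partition `X`, each characteristic map restricting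
to an embedding on the open cell, and each cell boundary mapped into the union of the open cells
of strictly smaller dimension. (For a finite complex, the weak topology condition is
automatic.) -/
def IsFiniteCWComplex (X : Type*) [TopologicalSpace X] : Prop :=
  T2Space X ∧
  ∃ (N : ℕ) (d : Fin N → ℕ) (Φ : ∀ i : Fin N, ↥(unitClosedBall (d i)) → X),
    (∀ i, Continuous (Φ i)) ∧
    (∀ i, Topology.IsEmbedding fun y : ↥(openPart (n := d i)) => Φ i y.1) ∧
    (⋃ i, Φ i '' openPart) = Set.univ ∧
    (Pairwise fun i j => Disjoint (Φ i '' openPart) (Φ j '' openPart)) ∧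
    (∀ i, Φ i '' spherePart ⊆ ⋃ j ∈ {j : Fin N | d j < d i}, Φ j '' openPart)

/-- `φ` is `π₁`-surjective: every loop downstairs based at `φ x` is, up to path homotopy, the
image of a loop upstairs based at `x`. -/
def Pi1Surjective {X Y : Type*} [TopologicalSpace X] [TopologicalSpace Y]
    {φ : X → Y} (hφ : Continuous φ) : Prop :=
  ∀ (x : X) (β : Path (φ x) (φ x)), ∃ α : Path x x, (α.map hφ).Homotopic β

variable {X₀ X₁ : Type*} [MetricSpace X₀] [MetricSpace X₁]


/-- `SizeLE p γ K`: the size of the path `γ` (the diameter of a lift of `γ` to the cover `p`,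
measured in the lifted metric) is at most `K`. -/
def SizeLE {E X : Type*} [MetricSpace E] [TopologicalSpace X]
    (p : E → X) (γ : unitInterval → X) (K : ENNReal) : Prop :=
  ∃ γ' : unitInterval → E, Continuous γ' ∧ p ∘ γ' = γ ∧ EMetric.diam (Set.range γ') ≤ K

/-- The systole of `X`: the infimum of the lengths of loops in `X` that are not
null-homotopic (rel basepoint). -/
def systole (X : Type*) [MetricSpace X] : ENNReal :=
  sInf {L | ∃ (x : X) (γ : Path x x), ¬ γ.Homotopic (Path.refl x) ∧
    L = pathELength (fun t => γ t)}


/-! Lifting a geodesic of `X` from `x̃` gives a point over its endpoint at no greater distance,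
since `p` preserves lengths; and `p` never increases distances, since `d̃` is intrinsic.
Conversely, let `2 d̃(ã, b̃) < sys(X)`. Take a path `δ` from `ã` to `b̃` with
`d̃(ã, b̃) + length δ < sys(X)` and a geodesic `γ` from `p ã` to `p b̃`: the loop `γ · (p ∘ δ)⁻¹`
is shorter than the systole, hence null-homotopic, so by monodromy the lift of `γ` from `ã` ends
at `b̃`, and `d̃(ã, b̃) ≤ length γ = d(p ã, p b̃)`. -/

section PathLength

variable {X : Type*} [PseudoEMetricSpace X] {x y z : X}

lemma edist_le_pathELength (γ : I → X) (s t : I) : edist (γ s) (γ t) ≤ pathELength γ :=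
  eVariationOn.edist_le γ (mem_univ s) (mem_univ t)

lemma Path.eVariationOn_extend_le (γ : Path x y) (s : Set ℝ) :
    eVariationOn γ.extend s ≤ pathELength γ :=
  eVariationOn.comp_le_of_monotoneOn _ _ ((monotone_projIcc zero_le_one).monotoneOn _)
    (mapsTo_univ _ _)

lemma Path.pathELength_symm_le (γ : Path x y) : pathELength γ.symm ≤ pathELength γ :=
  eVariationOn.comp_le_of_antitoneOn _ _ (fun _ _ _ _ h => unitInterval.symm_le_symm.2 h)
    (mapsTo_univ _ _)

lemma Path.pathELength_trans_le (γ : Path x y) (δ : Path y z) :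
    pathELength (γ.trans δ) ≤ pathELength γ + pathELength δ := by
  let half : I := ⟨1 / 2, by norm_num, by norm_num⟩
  have hsplit := eVariationOn.Icc_add_Icc (γ.trans δ) (s := univ) (a := 0) (b := half) (c := 1)
    (by rw [← Subtype.coe_le_coe]; norm_num [half]) (by rw [← Subtype.coe_le_coe]; norm_num [half])
    (mem_univ half)
  have hI : Icc (0 : I) 1 = univ := Icc_bot_top
  rw [univ_inter, univ_inter, univ_inter, hI] at hsplit
  rw [pathELength, ← hsplit]
  gcongr
  · calc eVariationOn (γ.trans δ) (Icc 0 half)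
        = eVariationOn (γ.extend ∘ fun t : I => 2 * (t : ℝ)) (Icc 0 half) :=
          eVariationOn.eq_of_eqOn fun t ht => by
            simpa [Path.extend_extends'] using
              γ.extend_trans_of_le_half δ (Subtype.coe_le_coe.2 ht.2)
      _ ≤ eVariationOn γ.extend univ :=
          eVariationOn.comp_le_of_monotoneOn _ _
            (fun s _ t _ h => by simpa using (Subtype.coe_le_coe.2 h)) (mapsTo_univ _ _)
      _ ≤ pathELength γ := γ.eVariationOn_extend_le _
  · calc eVariationOn (γ.trans δ) (Icc half 1)
        = eVariationOn (δ.extend ∘ fun t : I => 2 * (t : ℝ) - 1) (Icc half 1) :=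
          eVariationOn.eq_of_eqOn fun t ht => by
            simpa [Path.extend_extends'] using
              γ.extend_trans_of_half_le δ (Subtype.coe_le_coe.2 ht.1)
      _ ≤ eVariationOn δ.extend univ :=
          eVariationOn.comp_le_of_monotoneOn _ _
            (fun s _ t _ h => by simpa using (Subtype.coe_le_coe.2 h)) (mapsTo_univ _ _)
      _ ≤ pathELength δ := δ.eVariationOn_extend_le _

end PathLength

lemma Path.Homotopic.of_trans_symm {X : Type*} [TopologicalSpace X] {x y : X} {γ δ : Path x y}
    (h : (γ.trans δ.symm).Homotopic (Path.refl x)) : γ.Homotopic δ := by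
  rw [← Path.Homotopic.Quotient.eq, Path.Homotopic.Quotient.mk_trans,
    Path.Homotopic.Quotient.mk_symm, Path.Homotopic.Quotient.mk_refl] at h
  rw [← Path.Homotopic.Quotient.eq]
  calc Path.Homotopic.Quotient.mk γ
      = ((Path.Homotopic.Quotient.mk γ).trans (Path.Homotopic.Quotient.mk δ).symm).trans
          (Path.Homotopic.Quotient.mk δ) := by simp
    _ = Path.Homotopic.Quotient.mk δ := by rw [h, Path.Homotopic.Quotient.refl_trans]

lemma Path.homotopic_refl_of_pathELength_lt_systole {X : Type*} [MetricSpace X] {x : X}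
    (γ : Path x x) (h : pathELength γ < systole X) : γ.Homotopic (Path.refl x) := by
  by_contra hγ
  exact h.not_ge (sInf_le ⟨x, γ, hγ, rfl⟩)

section LiftedMetric

variable {E X : Type*} [MetricSpace E] [MetricSpace X] {p : E → X}

lemma PreservesPathLength.edist_le_pathELength_comp (hlen : PreservesPathLength p) {Γ : I → E}
    (hΓ : Continuous Γ) : edist (Γ 0) (Γ 1) ≤ pathELength (p ∘ Γ) :=
  hlen Γ hΓ ▸ edist_le_pathELength Γ 0 1

lemma IsLiftedMetric.edist_map_le (hlift : IsLiftedMetric p) (a b : E) :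
    edist (p a) (p b) ≤ edist a b := by
  rw [hlift.1 a b]
  refine le_iInf fun γ => ?_
  simpa [← hlift.2 γ γ.continuous] using edist_le_pathELength (p ∘ γ) 0 1

namespace IsCoveringMap

variable (hp : IsCoveringMap p)
include hp

lemma edist_liftPath_le (hlen : PreservesPathLength p) {x y : X} (γ : Path x y) {e : E}
    (he : x = p e) : edist e (hp.liftPath γ e (γ.source.trans he) 1) ≤ pathELength γ := by
  have hlift := hp.liftPath_lifts γ e (γ.source.trans he)
  simpa [hp.liftPath_zero, hlift] using
    hlen.edist_le_pathELength_comp (hp.liftPath γ e (γ.source.trans he)).continuous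

lemma liftPath_map_apply_one {a b : E} (δ : Path a b) :
    hp.liftPath (δ.map hp.continuous) a (δ.map hp.continuous).source 1 = b := by
  rw [← (hp.eq_liftPath_iff _).2 ⟨δ.continuous, rfl, δ.source⟩]
  exact δ.target

lemma exists_edist_le_of_isGeodesicMetric (hlen : PreservesPathLength p)
    (hgeo : IsGeodesicMetric X) (e : E) (y : X) : ∃ e', p e' = y ∧ edist e e' ≤ edist (p e) y := by
  obtain ⟨γ, hγ⟩ := hgeo (p e) y
  refine ⟨hp.liftPath γ e γ.source 1, ?_, hγ ▸ hp.edist_liftPath_le hlen γ rfl⟩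
  simpa using congr_fun (hp.liftPath_lifts γ e γ.source) 1

theorem edist_map_eq_of_two_mul_lt_systole (hlift : IsLiftedMetric p)
    (hgeo : IsGeodesicMetric X) {a b : E} (hab : 2 * edist a b < systole X) :
    edist (p a) (p b) = edist a b := by
  have hle := hlift.edist_map_le
  refine (hle a b).antisymm ?_
  obtain ⟨δ, hδ⟩ : ∃ δ : Path a b, edist a b + pathELength δ < systole X := by
    rw [two_mul] at hab
    nth_rw 2 [hlift.1 a b] at hab
    rwa [ENNReal.add_iInf, iInf_lt_iff] at hab
  obtain ⟨γ, hγ⟩ := hgeo (p a) (p b)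
  set pδ := δ.map hp.continuous
  have hloop : pathELength (γ.trans pδ.symm) < systole X :=
    calc pathELength (γ.trans pδ.symm)
        ≤ pathELength γ + pathELength pδ := by
          grw [γ.pathELength_trans_le, pδ.pathELength_symm_le]
      _ = edist (p a) (p b) + pathELength δ := by
          rw [hγ, ← hlift.2 δ δ.continuous]; rfl
      _ ≤ edist a b + pathELength δ := by grw [hle a b]
      _ < systole X := hδ
  have hγδ : γ.Homotopic pδ :=
    .of_trans_symm ((γ.trans pδ.symm).homotopic_refl_of_pathELength_lt_systole hloop)
  have hend : hp.liftPath γ a γ.source 1 = b := by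
    rw [hp.liftPath_apply_one_eq_of_homotopicRel (γ₀ := γ) (γ₁ := pδ) hγδ a γ.source pδ.source,
      hp.liftPath_map_apply_one δ]
  simpa [hend, hγ] using hp.edist_liftPath_le hlift.2 γ rfl

end IsCoveringMap

end LiftedMetric

lemma two_mul_edist_lt_ofReal_of_mem_ball {E : Type*} [PseudoMetricSpace E] {c a b : E} {r : ℝ}
    (ha : a ∈ Metric.ball c r) (hb : b ∈ Metric.ball c r) :
    2 * edist a b < ENNReal.ofReal (4 * r) := by
  rw [Metric.mem_ball] at ha hb
  have hd : 2 * dist a b < 4 * r := by linarith [dist_triangle_right a b c]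
  rw [edist_dist, ← ENNReal.ofReal_ofNat 2, ← ENNReal.ofReal_mul zero_le_two]
  exact (ENNReal.ofReal_lt_ofReal_iff (by linarith [dist_nonneg (x := a) (y := c)])).2 hd

theorem covering_isometry_on_small_balls_general
    {X Xt : Type} [MetricSpace X] [MetricSpace Xt]
    (hgeo : IsGeodesicMetric X)
    (p : Xt → X) (hp : IsCoveringMap p) (hlift : IsLiftedMetric p)
    (r : ℝ) (hr : ENNReal.ofReal (4 * r) < systole X)
    (xt : Xt) (x : X) (hx : p xt = x) :
    Set.BijOn p (Metric.ball xt r) (Metric.ball x r) ∧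
    ∀ a ∈ Metric.ball xt r, ∀ b ∈ Metric.ball xt r, dist (p a) (p b) = dist a b := by
  subst hx
  have hisom : ∀ a ∈ Metric.ball xt r, ∀ b ∈ Metric.ball xt r, dist (p a) (p b) = dist a b := by
    intro a ha b hb
    simpa [edist_dist] using hp.edist_map_eq_of_two_mul_lt_systole hlift hgeo
      ((two_mul_edist_lt_ofReal_of_mem_ball ha hb).trans hr)
  refine ⟨⟨fun a ha => ?_, fun a ha b hb hab => ?_, fun y hy => ?_⟩, hisom⟩
  · rwa [Metric.mem_ball, hisom a ha xt (Metric.mem_ball_self (Metric.pos_of_mem_ball ha))]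
  · have hdist := hisom a ha b hb
    rwa [hab, dist_self, eq_comm, dist_eq_zero] at hdist
  · obtain ⟨e, rfl, he⟩ := hp.exists_edist_le_of_isGeodesicMetric hlift.2 hgeo xt y
    refine ⟨e, ?_, rfl⟩
    rw [edist_dist, edist_dist, ENNReal.ofReal_le_ofReal_iff dist_nonneg] at he
    rw [Metric.mem_ball, dist_comm] at hy ⊢
    exact he.trans_lt hy

/-- for a compact connected finite CW complex `X` with a geodesic metric, a
covering map `p : X̃ → X` with a lifted metric, and any radius `r < sys(X)/4`, the restriction
of `p` to any ball `B(x̃, r)` is an isometry onto `B(p(x̃), r)`. -/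
theorem covering_isometry_on_small_balls
    {X Xt : Type} [MetricSpace X] [MetricSpace Xt]
    [CompactSpace X] [ConnectedSpace X]
    (hcw : IsFiniteCWComplex X) (hgeo : IsGeodesicMetric X)
    (p : Xt → X) (hp : IsCoveringMap p) (hlift : IsLiftedMetric p)
    (r : ℝ) (hr : ENNReal.ofReal (4 * r) < systole X)
    (xt : Xt) (x : X) (hx : p xt = x) :
    Set.BijOn p (Metric.ball xt r) (Metric.ball x r) ∧
    ∀ a ∈ Metric.ball xt r, ∀ b ∈ Metric.ball xt r, dist (p a) (p b) = dist a b :=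
  covering_isometry_on_small_balls_general hgeo p hp hlift r hr xt x hx

end
end

section
/- Let (𝒥, d) be a compact metric space with diam(𝒥) > 0 and f : 𝒥 → 𝒥 a map, and suppose there exist constants 0 < θ < 1 and 0 < r₀ < diam(𝒥) such that for every x ∈ 𝒥 and every 0 < r < r₀: f(B(x, r)) = B(f(x), θ⁻¹·r), and d(f(a), f(b)) = θ⁻¹·d(a, b) for all a, b ∈ B(x, r). Then (𝒥, d) is approximately self-similar: there exists L ≥ 1 such that for every z ∈ 𝒥 and every 0 < r < diam(𝒥) there exist an open set U ⊆ 𝒥 and a bijection h : B(z, r) → U with (1/L)·d(a, b)/r ≤ d(h(a), h(b)) ≤ L·d(a, b)/r for all a, b ∈ B(z, r). -/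
/-!
Iterating `f` multiplies distances on small balls by `θ⁻¹` at every step, so a ball `B(z, r)` can
be blown up by `f^[n]` as long as the intermediate images stay below radius `r₀`.  Stopping at the
first `n` with `θ⁻¹ ^ n * r ≥ θ * r₀`, the map `f^[n]` is a homothety of ratio `θ⁻¹ ^ n` from
`B(z, r)` onto an open ball of radius `θ⁻¹ ^ n * r ∈ [θ r₀, diam 𝒥)`.  Rescaled by `r`, this is a
similarity with ratio in that fixed interval, which gives a uniform bilipschitz constant.
-/

open Metric Set

def ScalesBall {X : Type*} [PseudoMetricSpace X] (f : X → X) (c : ℝ) (x : X) (r : ℝ) : Prop :=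
  f '' ball x r = ball (f x) (c * r) ∧
    ∀ a ∈ ball x r, ∀ b ∈ ball x r, dist (f a) (f b) = c * dist a b

namespace ScalesBall

variable {X : Type*} [PseudoMetricSpace X] {f g : X → X} {c c' r : ℝ} {x : X}

theorem id (x : X) (r : ℝ) : ScalesBall id 1 x r :=
  ⟨by simp, fun a _ b _ => by simp⟩

theorem comp (hf : ScalesBall f c x r) (hg : ScalesBall g c' (f x) (c * r)) :
    ScalesBall (g ∘ f) (c' * c) x r := by
  have hmaps : ∀ a ∈ ball x r, f a ∈ ball (f x) (c * r) := fun a ha =>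
    hf.1 ▸ mem_image_of_mem f ha
  refine ⟨?_, fun a ha b hb => ?_⟩
  · rw [image_comp, hf.1, hg.1, mul_assoc, Function.comp_apply]
  · rw [Function.comp_apply, Function.comp_apply, hg.2 _ (hmaps a ha) _ (hmaps b hb),
      hf.2 a ha b hb, mul_assoc]

theorem iterate {n : ℕ} (h : ∀ k < n, ScalesBall f c (f^[k] x) (c ^ k * r)) :
    ScalesBall f^[n] (c ^ n) x r := by
  induction n with
  | zero => simpa using ScalesBall.id x r
  | succ n ih =>
    rw [Function.iterate_succ', pow_succ']
    exact (ih fun k hk => h k (Nat.lt_succ_of_lt hk)).comp (h n n.lt_succ_self)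

theorem rescaled_bilipschitz (h : ScalesBall f c x r) (hr : 0 < r) {L : ℝ}
    (hlow : 1 / L ≤ c * r) (hupp : c * r ≤ L) :
    ∀ a ∈ ball x r, ∀ b ∈ ball x r,
      1 / L * (dist a b / r) ≤ dist (f a) (f b) ∧ dist (f a) (f b) ≤ L * (dist a b / r) := by
  intro a ha b hb
  have hscaled : dist (f a) (f b) = c * r * (dist a b / r) := by
    rw [h.2 a ha b hb]
    field_simp
  have hnonneg : 0 ≤ dist a b / r := div_nonneg dist_nonneg hr.le
  rw [hscaled]
  exact ⟨mul_le_mul_of_nonneg_right hlow hnonneg, mul_le_mul_of_nonneg_right hupp hnonneg⟩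

end ScalesBall

theorem ScalesBall.bijOn {X : Type*} [MetricSpace X] {f : X → X} {c r : ℝ} {x : X}
    (h : ScalesBall f c x r) (hc : c ≠ 0) : BijOn f (ball x r) (ball (f x) (c * r)) := by
  rw [← h.1]
  refine InjOn.bijOn_image fun a ha b hb hab => dist_eq_zero.mp ?_
  have := h.2 a ha b hb
  rw [hab, dist_self] at this
  exact (mul_eq_zero.mp this.symm).resolve_left hc

theorem exists_first_pow_mul_ge {c ρ r : ℝ} (hc : 1 < c) (hr : 0 < r) :
    ∃ n : ℕ, (∀ k < n, c ^ k * r < ρ) ∧ ρ ≤ c ^ n * r ∧ c ^ n * r ≤ max r (c * ρ) := by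
  classical
  have hex : ∃ n : ℕ, ρ ≤ c ^ n * r := by
    obtain ⟨n, hn⟩ := pow_unbounded_of_one_lt (ρ / r) hc
    exact ⟨n, ((div_lt_iff₀ hr).mp hn).le⟩
  obtain ⟨n, hbelow, hreach⟩ : ∃ n : ℕ, (∀ k < n, c ^ k * r < ρ) ∧ ρ ≤ c ^ n * r :=
    ⟨Nat.find hex, fun k hk => not_le.mp (Nat.find_min hex hk), Nat.find_spec hex⟩
  refine ⟨n, hbelow, hreach, ?_⟩
  cases n with
  | zero => simp
  | succ m =>
    calc c ^ (m + 1) * r = c * (c ^ m * r) := by ring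
      _ ≤ c * ρ := mul_le_mul_of_nonneg_left (hbelow m m.lt_succ_self).le (by positivity)
      _ ≤ max r (c * ρ) := le_max_right _ _

theorem approximately_self_similar_of_local_homothety_general
    {J : Type*} [MetricSpace J]
    (f : J → J) (θ r₀ : ℝ) (hθ0 : 0 < θ) (hθ1 : θ < 1)
    (hr₀0 : 0 < r₀) (hr₀ : r₀ < Metric.diam (Set.univ : Set J))
    (hball : ∀ (x : J) (r : ℝ), 0 < r → r < r₀ →
      f '' Metric.ball x r = Metric.ball (f x) (θ⁻¹ * r) ∧
      ∀ a ∈ Metric.ball x r, ∀ b ∈ Metric.ball x r,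
        dist (f a) (f b) = θ⁻¹ * dist a b) :
    ∃ L : ℝ, 1 ≤ L ∧ ∀ (z : J) (r : ℝ), 0 < r → r < Metric.diam (Set.univ : Set J) →
      ∃ U : Set J, IsOpen U ∧ ∃ h : J → J, Set.BijOn h (Metric.ball z r) U ∧
        ∀ a ∈ Metric.ball z r, ∀ b ∈ Metric.ball z r,
          (1 / L) * (dist a b / r) ≤ dist (h a) (h b) ∧
          dist (h a) (h b) ≤ L * (dist a b / r) := by
  set D := diam (univ : Set J)
  have hρ : 0 < θ * r₀ := mul_pos hθ0 hr₀0
  have hρr₀ : θ * r₀ < r₀ := mul_lt_of_lt_one_left hr₀0 hθ1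
  refine ⟨max 1 (max D (θ * r₀)⁻¹), le_max_left _ _, fun z r hr hrD => ?_⟩
  obtain ⟨n, hbelow, hreach, hover⟩ :=
    exists_first_pow_mul_ge (ρ := θ * r₀) ((one_lt_inv₀ hθ0).mpr hθ1) hr
  rw [inv_mul_cancel_left₀ hθ0.ne'] at hover
  have hscale : ScalesBall f^[n] (θ⁻¹ ^ n) z r :=
    ScalesBall.iterate fun k hk => hball _ _ (by positivity) ((hbelow k hk).trans hρr₀)
  refine ⟨_, isOpen_ball, f^[n], hscale.bijOn (by positivity),
    hscale.rescaled_bilipschitz hr ?_ ?_⟩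
  · rw [one_div_le (by positivity) (by positivity)]
    calc 1 / (θ⁻¹ ^ n * r) ≤ 1 / (θ * r₀) := one_div_le_one_div_of_le hρ hreach
      _ = (θ * r₀)⁻¹ := one_div _
      _ ≤ _ := (le_max_right _ _).trans (le_max_right _ _)
  · exact (hover.trans (max_le hrD.le hr₀.le)).trans ((le_max_left _ _).trans (le_max_right _ _))

/-- Suppose `(𝒥, d)` is a compact metric space of positive diameter and `f : 𝒥 → 𝒥` is such that,
for some `0 < θ < 1` and `0 < r₀ < diam 𝒥`, every ball of radius `r < r₀` is mapped by `f` onto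
the ball of radius `θ⁻¹ r` around the image of the center, with all distances scaled exactly by
`θ⁻¹`.  Then `(𝒥, d)` is approximately self-similar: there is `L ≥ 1` such that every rescaled
ball `(B(z,r), d/r)` with `0 < r < diam 𝒥` is `L`-bilipschitz equivalent to an open subset. -/
theorem approximately_self_similar_of_local_homothety
    {J : Type*} [MetricSpace J] [CompactSpace J]
    (hdiam : 0 < Metric.diam (Set.univ : Set J))
    (f : J → J) (θ r₀ : ℝ) (hθ0 : 0 < θ) (hθ1 : θ < 1)
    (hr₀0 : 0 < r₀) (hr₀ : r₀ < Metric.diam (Set.univ : Set J))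
    (hball : ∀ (x : J) (r : ℝ), 0 < r → r < r₀ →
      f '' Metric.ball x r = Metric.ball (f x) (θ⁻¹ * r) ∧
      ∀ a ∈ Metric.ball x r, ∀ b ∈ Metric.ball x r,
        dist (f a) (f b) = θ⁻¹ * dist a b) :
    ∃ L : ℝ, 1 ≤ L ∧ ∀ (z : J) (r : ℝ), 0 < r → r < Metric.diam (Set.univ : Set J) →
      ∃ U : Set J, IsOpen U ∧ ∃ h : J → J, Set.BijOn h (Metric.ball z r) U ∧
        ∀ a ∈ Metric.ball z r, ∀ b ∈ Metric.ball z r,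
          (1 / L) * (dist a b / r) ≤ dist (h a) (h b) ∧
          dist (h a) (h b) ≤ L * (dist a b / r) :=
  approximately_self_similar_of_local_homothety_general f θ r₀ hθ0 hθ1 hr₀0 hr₀ hball
end

section
/- Let X be a topological space, S a finite family of subsets of X whose union is X, and q ≥ 1. Let c = Σᵢ wᵢ γᵢ be a weighted multi-curve on X with strands γᵢ : Jᵢ → X, and let d be a subdivision of c, with pieces δ_{i,k} = γᵢ ∘ a_{i,k}. Then: (a) mod_q(d, S) ≤ mod_q(c, S). (b) If moreover no piece δ_{i,k} has image contained in a single element of S, and there is a constant K such that for every s ∈ S and every strand index i the number of connected components of γᵢ⁻¹(s) is at most K, then mod_q(c, S) ≤ (2K)^q · mod_q(d, S). -/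
open Set

noncomputable section

attribute [local instance] Classical.propDecidable

/-- The domain of a curve: a closed interval or a circle. -/
inductive CurveDomain
  | interval
  | circle

/-- The underlying topological space of a curve domain. -/
def CurveDomain.space : CurveDomain → Type
  | .interval => unitInterval
  | .circle => AddCircle (1 : ℝ)

instance (d : CurveDomain) : TopologicalSpace d.space :=
  match d with
  | .interval => inferInstanceAs (TopologicalSpace unitInterval)
  | .circle => inferInstanceAs (TopologicalSpace (AddCircle (1 : ℝ)))

/-- A curve on `X`: a continuous map from a compact connected 1-manifold
(a closed interval or a circle) to `X`. -/
structure Curve (X : Type*) [TopologicalSpace X] where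
  dom : CurveDomain
  toFun : dom.space → X
  continuous : Continuous toFun

/-- A weighted multi-curve on `X`: a finite formal sum `Σᵢ wᵢ γᵢ` of curves with positive
real weights. -/
structure WMCurve (X : Type*) [TopologicalSpace X] where
  ι : Type
  fin : Fintype ι
  w : ι → ℝ
  w_pos : ∀ i, 0 < w i
  strand : ι → Curve X

attribute [instance] WMCurve.fin

variable {X : Type*} [TopologicalSpace X] {ι : Type} [Fintype ι]

/-- The `ρ`-length of a curve with respect to the finite family `S`: the sum of `ρ` over the
members of the family meeting the image of the curve. -/
def Curve.len (γ : Curve X) (S : ι → Set X) (ρ : ι → ℝ) : ℝ :=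
  ∑ i, if (Set.range γ.toFun ∩ S i).Nonempty then ρ i else 0

/-- The `ρ`-length of a weighted multi-curve. -/
def WMCurve.len (c : WMCurve X) (S : ι → Set X) (ρ : ι → ℝ) : ℝ :=
  ∑ j, c.w j * (c.strand j).len S ρ

/-- A test metric `ρ` is admissible for a family `Γ` of weighted multi-curves if it is
nonnegative and every member of `Γ` has `ρ`-length at least 1. -/
def Admissible (Γ : Set (WMCurve X)) (S : ι → Set X) (ρ : ι → ℝ) : Prop :=
  (∀ i, 0 ≤ ρ i) ∧ ∀ c ∈ Γ, 1 ≤ c.len S ρ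

/-- The combinatorial `q`-modulus of a family of weighted multi-curves with respect to the
finite family `S`. -/
def modulus (q : ℝ) (Γ : Set (WMCurve X)) (S : ι → Set X) : ℝ :=
  sInf {V | ∃ ρ : ι → ℝ, Admissible Γ S ρ ∧ V = ∑ i, ρ i ^ q}

/-- A single (unweighted) curve, regarded as a weighted multi-curve with one strand of
weight 1. -/
def Curve.toWMC (γ : Curve X) : WMCurve X :=
  ⟨PUnit, inferInstance, fun _ => 1, fun _ => one_pos, fun _ => γ⟩

/-- The combinatorial `q`-modulus of a family of curves. -/
def curveModulus (q : ℝ) (Γ : Set (Curve X)) (S : ι → Set X) : ℝ :=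
  modulus q (Curve.toWMC '' Γ) S



/-- The data of a subdivision of a weighted multi-curve `c`: for each strand `i`, finitely many
continuous maps `a i k` from closed intervals into the domain of the strand, whose images cover
the domain and pairwise overlap in at most single boundary points. -/
structure Subdivision {X : Type*} [TopologicalSpace X] (c : WMCurve X) where
  m : c.ι → ℕ
  a : ∀ i, Fin (m i) → (unitInterval → (c.strand i).dom.space)
  cont : ∀ i k, Continuous (a i k)
  covers : ∀ i, (⋃ k, Set.range (a i k)) = Set.univ
  overlap : ∀ i, ∀ k k' : Fin (m i), k ≠ k' →
    (Set.range (a i k) ∩ Set.range (a i k')).Subsingleton ∧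
    Set.range (a i k) ∩ Set.range (a i k') ⊆
      frontier (Set.range (a i k)) ∩ frontier (Set.range (a i k'))

/-- The subdivided weighted multi-curve: the piece indexed by `(i, k)` is
`γᵢ ∘ a_{i,k}` with weight `wᵢ`. -/
def Subdivision.curve {X : Type*} [TopologicalSpace X] {c : WMCurve X}
    (D : Subdivision c) : WMCurve X where
  ι := Σ i : c.ι, Fin (D.m i)
  fin := inferInstance
  w := fun p => c.w p.1
  w_pos := fun p => c.w_pos p.1
  strand := fun p =>
    ⟨.interval, (c.strand p.1).toFun ∘ D.a p.1 p.2,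
      (c.strand p.1).continuous.comp (D.cont p.1 p.2)⟩

/-!
Every member of `S` met by a strand is met by one of its pieces, so subdividing can only increase
`ρ`-lengths; this gives (a). For (b), the pieces of a strand `γᵢ` are connected subsets of an
interval or a circle pairwise sharing at most one point, and at most two of them can cross a given
connected set (meet it without lying inside it): on a line a crossing set contains a segment
leaving the set through one of its two ends, and two segments leaving through the same end overlap
in an interval; a circle is first cut open at a point outside the set. Since no piece lies inside a
member `s` of `S`, every piece meeting `γᵢ⁻¹(s)` crosses one of its at most `K` components, so at
most `2K` pieces meet `s`. Hence `ℓ_ρ(d) ≤ 2K ℓ_ρ(c)`, and `2K ρ` is admissible for `c` whenever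
`ρ` is admissible for `d`.
-/

open scoped Finset

def Crosses {Y : Type*} (P C : Set Y) : Prop := (P ∩ C).Nonempty ∧ ¬ P ⊆ C

lemma Crosses.image {Y Z : Type*} {f : Y → Z} (hf : Function.Injective f) {P C : Set Y}
    (h : Crosses P C) : Crosses (f '' P) (f '' C) :=
  ⟨image_inter hf ▸ h.1.image f, (image_subset_image_iff hf).not.2 h.2⟩

section LinearOrder

variable {α : Type*} [LinearOrder α]

def HasCrossingSegment (O C : Set α) : Prop := ∃ x ∈ C, ∃ y ∉ C, uIcc x y ⊆ O

lemma Set.OrdConnected.mem_lowerBounds_or_mem_upperBounds {C : Set α} (hC : C.OrdConnected)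
    {y : α} (hy : y ∉ C) : y ∈ lowerBounds C ∨ y ∈ upperBounds C := by
  by_contra! h
  simp only [mem_lowerBounds, mem_upperBounds, not_forall, not_le] at h
  obtain ⟨⟨a, ha, hay⟩, b, hb, hyb⟩ := h
  exact hy (hC.out ha hb ⟨hay.le, hyb.le⟩)

lemma infinite_uIcc_inter_of_mem_lowerBounds [DenselyOrdered α] {C : Set α} {x x' y y' : α}
    (hx : x ∈ C) (hx' : x' ∈ C) (hy : y ∈ lowerBounds C \ C) (hy' : y' ∈ lowerBounds C \ C) :
    (uIcc x y ∩ uIcc x' y').Infinite := by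
  have hmin : min x x' ∈ C := by rcases min_choice x x' with h | h <;> rwa [h]
  have hmax : max y y' ∉ C := by
    rcases max_choice y y' with h | h <;> rw [h]
    exacts [hy.2, hy'.2]
  have hlt : max y y' < min x x' :=
    lt_of_le_of_ne (max_le (hy.1 hmin) (hy'.1 hmin)) fun h => hmax (h ▸ hmin)
  refine (Icc_infinite hlt).mono fun z hz => ⟨?_, ?_⟩
  · rw [uIcc_of_ge (hy.1 hx)]
    exact ⟨(le_max_left _ _).trans hz.1, hz.2.trans (min_le_left _ _)⟩
  · rw [uIcc_of_ge (hy'.1 hx')]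
    exact ⟨(le_max_right _ _).trans hz.1, hz.2.trans (min_le_right _ _)⟩

lemma infinite_uIcc_inter_of_mem_upperBounds [DenselyOrdered α] {C : Set α} {x x' y y' : α}
    (hx : x ∈ C) (hx' : x' ∈ C) (hy : y ∈ upperBounds C \ C) (hy' : y' ∈ upperBounds C \ C) :
    (uIcc x y ∩ uIcc x' y').Infinite := by
  have h := infinite_uIcc_inter_of_mem_lowerBounds (α := αᵒᵈ) (C := OrderDual.ofDual ⁻¹' C)
    (x := OrderDual.toDual x) (x' := OrderDual.toDual x') (y := OrderDual.toDual y)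
    (y' := OrderDual.toDual y') hx hx' hy hy'
  rw [uIcc_toDual, uIcc_toDual] at h
  exact h

lemma card_hasCrossingSegment_le_two [DenselyOrdered α] {κ : Type*} [Fintype κ] {C : Set α}
    (hC : C.OrdConnected) {O : κ → Set α} (hO : Pairwise fun k k' => (O k ∩ O k').Finite) :
    #{k | HasCrossingSegment (O k) C} ≤ 2 := by
  have card_le_one : ∀ B : Set α, (∀ x ∈ C, ∀ x' ∈ C, ∀ y ∈ B, ∀ y' ∈ B,
      (uIcc x y ∩ uIcc x' y').Infinite) →
      #{k | ∃ x ∈ C, ∃ y ∈ B, uIcc x y ⊆ O k} ≤ 1 := by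
    intro B hB
    refine Finset.card_le_one.2 fun k hk k' hk' => ?_
    obtain ⟨x, hx, y, hy, hk⟩ := (Finset.mem_filter.1 hk).2
    obtain ⟨x', hx', y', hy', hk'⟩ := (Finset.mem_filter.1 hk').2
    by_contra hne
    exact (hB x hx x' hx' y hy y' hy').mono (inter_subset_inter hk hk') (hO hne)
  calc #{k | HasCrossingSegment (O k) C}
      ≤ #(({k | ∃ x ∈ C, ∃ y ∈ lowerBounds C \ C, uIcc x y ⊆ O k} : Finset κ) ∪
          ({k | ∃ x ∈ C, ∃ y ∈ upperBounds C \ C, uIcc x y ⊆ O k} : Finset κ)) := by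
        refine Finset.card_le_card fun k hk => ?_
        obtain ⟨x, hx, y, hy, hxy⟩ := (Finset.mem_filter.1 hk).2
        simp only [Finset.mem_union, Finset.mem_filter, Finset.mem_univ, true_and]
        rcases hC.mem_lowerBounds_or_mem_upperBounds hy with h | h
        exacts [Or.inl ⟨x, hx, y, ⟨h, hy⟩, hxy⟩, Or.inr ⟨x, hx, y, ⟨h, hy⟩, hxy⟩]
    _ ≤ 1 + 1 := (Finset.card_union_le _ _).trans <| add_le_add
        (card_le_one _ fun _ hx _ hx' _ hy _ hy' =>
          infinite_uIcc_inter_of_mem_lowerBounds hx hx' hy hy')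
        (card_le_one _ fun _ hx _ hx' _ hy _ hy' =>
          infinite_uIcc_inter_of_mem_upperBounds hx hx' hy hy')

lemma IsPreconnected.card_crosses_le_two [TopologicalSpace α] [OrderClosedTopology α]
    [DenselyOrdered α] {κ : Type*} [Fintype κ] {C : Set α} (hC : IsPreconnected C)
    {P : κ → Set α} (hP : ∀ k, IsPreconnected (P k))
    (hdisj : Pairwise fun k k' => (P k ∩ P k').Subsingleton) :
    #{k | Crosses (P k) C} ≤ 2 := by
  refine (Finset.card_le_card (Finset.monotone_filter_right _ fun k _ hk => ?_)).trans
    (card_hasCrossingSegment_le_two hC.ordConnected fun k k' h => (hdisj h).finite)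
  obtain ⟨⟨x, hxP, hxC⟩, hPC⟩ := hk
  obtain ⟨y, hyP, hyC⟩ := not_subset.1 hPC
  exact ⟨x, hxC, y, hyC, (hP k).ordConnected.uIcc_subset hxP hyP⟩

end LinearOrder

section Circle

/-- Both endpoints of `[0, 1]` lie over `0 : AddCircle 1`. -/
def circleLift (P : Set (AddCircle (1 : ℝ))) : Set ℝ := Icc 0 1 ∩ (↑) ⁻¹' P

lemma finite_circleLift_inter {P P' : Set (AddCircle (1 : ℝ))} (h : (P ∩ P').Subsingleton) :
    (circleLift P ∩ circleLift P').Finite := by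
  have hsub : circleLift P ∩ circleLift P' ⊆ (Ico 0 1 ∩ (↑) ⁻¹' (P ∩ P')) ∪ {1} := by
    rintro r ⟨⟨⟨hr0, hr1⟩, hrP⟩, -, hrP'⟩
    rcases hr1.lt_or_eq with hr1 | rfl
    exacts [Or.inl ⟨⟨hr0, hr1⟩, hrP, hrP'⟩, Or.inr rfl]
  refine ((Subsingleton.finite fun r hr s hs => ?_).union (finite_singleton 1)).subset hsub
  have hIco : Ico (0 : ℝ) 1 = Ico 0 (0 + 1) := by rw [zero_add]
  exact (AddCircle.coe_eq_coe_iff_of_mem_Ico (hIco ▸ hr.1) (hIco ▸ hs.1)).1 (h hr.2 hs.2)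

lemma ordConnected_circleLift {P : Set (AddCircle (1 : ℝ))} (hP : IsPreconnected P)
    (h0 : 0 ∉ P) : (circleLift P).OrdConnected := by
  let e := AddCircle.openPartialHomeomorphCoe (1 : ℝ) 0
  have hPe : P ⊆ e.target := by
    rintro z hz rfl
    exact h0 (by simpa using hz)
  have hlift : circleLift P = e.symm '' P := by
    rw [e.symm_image_eq_source_inter_preimage hPe]
    ext r
    simp only [circleLift, e, AddCircle.openPartialHomeomorphCoe_source, zero_add, mem_inter_iff,
      mem_preimage, AddCircle.openPartialHomeomorphCoe_apply]
    refine ⟨fun ⟨hr, hrP⟩ => ⟨⟨lt_of_le_of_ne hr.1 ?_, lt_of_le_of_ne hr.2 ?_⟩, hrP⟩,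
      fun ⟨hr, hrP⟩ => ⟨Ioo_subset_Icc_self hr, hrP⟩⟩
    · rintro rfl; exact h0 (by simpa using hrP)
    · rintro rfl; exact h0 (by simpa [AddCircle.coe_period] using hrP)
  rw [hlift]
  exact (hP.image _ (e.continuousOn_symm.mono hPe)).ordConnected

lemma Icc_subset_circleLift_or {P : Set (AddCircle (1 : ℝ))} (hP : IsPreconnected P)
    (h0 : 0 ∈ P) {t : ℝ} (ht : t ∈ Ioo 0 1) (htP : (t : AddCircle (1 : ℝ)) ∈ P) :
    Icc 0 t ⊆ circleLift P ∨ Icc t 1 ⊆ circleLift P := by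
  by_contra! h
  obtain ⟨u, hu, huP⟩ := not_subset.1 h.1
  obtain ⟨v, hv, hvP⟩ := not_subset.1 h.2
  replace huP : (u : AddCircle (1 : ℝ)) ∉ P := fun h => huP ⟨⟨hu.1, hu.2.trans ht.2.le⟩, h⟩
  replace hvP : (v : AddCircle (1 : ℝ)) ∉ P := fun h => hvP ⟨⟨ht.1.le.trans hv.1, hv.2⟩, h⟩
  have hu0 : 0 < u := lt_of_le_of_ne hu.1 fun h => huP (by simpa [← h] using h0)
  have hv1 : v < 1 := lt_of_le_of_ne hv.2 fun h => hvP (by simpa [h, AddCircle.coe_period] using h0)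
  have htuv : t ∈ Ioo u v :=
    ⟨lt_of_le_of_ne hu.2 fun h => huP (h ▸ htP), lt_of_le_of_ne hv.1 fun h => hvP (h ▸ htP)⟩
  -- `P` would be split by the two open arcs cut out by `u` and `v`.
  have hcover : P ⊆ (↑) '' Ioo u v ∪ ((↑) '' Icc u v)ᶜ := by
    intro z hz
    by_cases hz' : z ∈ ((↑) : ℝ → AddCircle (1 : ℝ)) '' Icc u v
    · obtain ⟨r, hr, rfl⟩ := hz'
      exact Or.inl ⟨r, ⟨lt_of_le_of_ne hr.1 fun h => huP (h ▸ hz),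
        lt_of_le_of_ne hr.2 fun h => hvP (h ▸ hz)⟩, rfl⟩
    · exact Or.inr hz'
  have h0uv : (0 : AddCircle (1 : ℝ)) ∉ (↑) '' Icc u v := by
    rintro ⟨r, hr, hr0⟩
    have hr' : r ∈ Ico 0 1 := ⟨hu0.le.trans hr.1, hr.2.trans_lt hv1⟩
    exact (hu0.trans_le hr.1).ne' ((AddCircle.coe_eq_zero_iff_of_mem_Ico hr').1 hr0)
  obtain ⟨z, -, hz, hz'⟩ := hP _ _ (QuotientAddGroup.isOpenMap_coe _ isOpen_Ioo)
    (isCompact_Icc.image (AddCircle.continuous_mk' 1)).isClosed.isOpen_compl hcover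
    ⟨t, htP, t, htuv, rfl⟩ ⟨0, h0, h0uv⟩
  exact hz' (image_mono Ioo_subset_Icc_self hz)

lemma Crosses.hasCrossingSegment_circleLift {P C : Set (AddCircle (1 : ℝ))}
    (hP : IsPreconnected P) (hPC : Crosses P C) (h0 : 0 ∉ C) :
    HasCrossingSegment (circleLift P) (circleLift C) := by
  obtain ⟨⟨x, hxP, hxC⟩, hPC⟩ := hPC
  obtain ⟨r, hr, rfl⟩ := AddCircle.eq_coe_Ico x
  have hrC : r ∈ circleLift C := ⟨Ico_subset_Icc_self hr, hxC⟩
  by_cases hP0 : 0 ∈ P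
  · have hr0 : 0 < r := lt_of_le_of_ne hr.1 fun h => h0 (by simpa [← h] using hxC)
    rcases Icc_subset_circleLift_or hP hP0 ⟨hr0, hr.2⟩ hxP with h | h
    · exact ⟨r, hrC, 0, fun h => h0 (by simpa using h.2), by rwa [uIcc_of_ge hr.1]⟩
    · exact ⟨r, hrC, 1, fun h => h0 (by simpa [AddCircle.coe_period] using h.2),
        by rwa [uIcc_of_le hr.2.le]⟩
  · obtain ⟨y, hyP, hyC⟩ := not_subset.1 hPC
    obtain ⟨s, hs, rfl⟩ := AddCircle.eq_coe_Ico y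
    exact ⟨r, hrC, s, fun h => hyC h.2, (ordConnected_circleLift hP hP0).uIcc_subset
      ⟨Ico_subset_Icc_self hr, hxP⟩ ⟨Ico_subset_Icc_self hs, hyP⟩⟩

variable {κ : Type*} [Fintype κ]

lemma AddCircle.card_crosses_le_two_of_zero_notMem {C : Set (AddCircle (1 : ℝ))}
    (hC : IsPreconnected C) (h0 : 0 ∉ C) {P : κ → Set (AddCircle (1 : ℝ))}
    (hP : ∀ k, IsPreconnected (P k)) (hdisj : Pairwise fun k k' => (P k ∩ P k').Subsingleton) :
    #{k | Crosses (P k) C} ≤ 2 :=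
  (Finset.card_le_card (Finset.monotone_filter_right _ fun k _ hk =>
    hk.hasCrossingSegment_circleLift (hP k) h0)).trans
    (card_hasCrossingSegment_le_two (ordConnected_circleLift hC h0)
      fun _ _ h => finite_circleLift_inter (hdisj h))

lemma AddCircle.card_crosses_le_two {C : Set (AddCircle (1 : ℝ))} (hC : IsPreconnected C)
    {P : κ → Set (AddCircle (1 : ℝ))} (hP : ∀ k, IsPreconnected (P k))
    (hdisj : Pairwise fun k k' => (P k ∩ P k').Subsingleton) :
    #{k | Crosses (P k) C} ≤ 2 := by
  rcases Finset.eq_empty_or_nonempty ({k | Crosses (P k) C} : Finset κ) with h | ⟨k, hk⟩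
  · simp [h]
  -- Rotate a point `w` of some crossing set outside `C` to `0`.
  obtain ⟨w, -, hwC⟩ := not_subset.1 (Finset.mem_filter.1 hk).2.2
  have hinj : Function.Injective fun z : AddCircle (1 : ℝ) => z - w := sub_left_injective
  have hcont : Continuous fun z : AddCircle (1 : ℝ) => z - w := continuous_sub_right w
  calc #{k | Crosses (P k) C} ≤ #{k | Crosses ((· - w) '' P k) ((· - w) '' C)} :=
        Finset.card_le_card (Finset.monotone_filter_right _ fun k _ hk => hk.image hinj)
    _ ≤ 2 := card_crosses_le_two_of_zero_notMem (hC.image _ hcont.continuousOn)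
        (fun ⟨z, hz, hzw⟩ => hwC (sub_eq_zero.1 hzw ▸ hz))
        (fun k => (hP k).image _ hcont.continuousOn)
        fun k k' h => by
          simp only [← image_inter hinj]
          exact (hdisj h).image _

end Circle

namespace CurveDomain

instance (d : CurveDomain) : Nonempty d.space := by
  cases d
  exacts [inferInstanceAs (Nonempty unitInterval), inferInstanceAs (Nonempty (AddCircle (1 : ℝ)))]

variable {d : CurveDomain} {κ : Type*} [Fintype κ]

lemma card_crosses_le_two {C : Set d.space} (hC : IsPreconnected C) {P : κ → Set d.space}
    (hP : ∀ k, IsPreconnected (P k)) (hdisj : Pairwise fun k k' => (P k ∩ P k').Subsingleton) :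
    #{k | Crosses (P k) C} ≤ 2 := by
  cases d
  · have hC' : @IsPreconnected unitInterval _ C := hC
    have hP' : ∀ k, @IsPreconnected unitInterval _ (P k) := hP
    exact IsPreconnected.card_crosses_le_two (α := unitInterval) hC' hP' hdisj
  · exact AddCircle.card_crosses_le_two hC hP hdisj

/-- A set meeting `F` but not contained in it crosses a component of `F`, and each component is
crossed at most twice. -/
lemma card_inter_nonempty_le {F : Set d.space} (hF : (connectedComponentIn F '' F).Finite)
    {P : κ → Set d.space} (hP : ∀ k, IsPreconnected (P k))
    (hdisj : Pairwise fun k k' => (P k ∩ P k').Subsingleton) (hPF : ∀ k, ¬ P k ⊆ F) :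
    #{k | (P k ∩ F).Nonempty} ≤ 2 * (connectedComponentIn F '' F).ncard := by
  calc #{k | (P k ∩ F).Nonempty}
      ≤ #(hF.toFinset.biUnion fun b => ({k | Crosses (P k) b} : Finset κ)) := by
        refine Finset.card_le_card fun k hk => ?_
        obtain ⟨x, hxP, hxF⟩ := (Finset.mem_filter.1 hk).2
        refine Finset.mem_biUnion.2 ⟨_, hF.mem_toFinset.2 ⟨x, hxF, rfl⟩, Finset.mem_filter.2
          ⟨Finset.mem_univ k, ⟨x, hxP, mem_connectedComponentIn hxF⟩, fun h => hPF k ?_⟩⟩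
        exact h.trans (connectedComponentIn_subset F x)
    _ ≤ ∑ b ∈ hF.toFinset, #{k | Crosses (P k) b} := Finset.card_biUnion_le
    _ ≤ #hF.toFinset • 2 := Finset.sum_le_card_nsmul _ _ _ fun b hb => by
        obtain ⟨x, -, rfl⟩ := hF.mem_toFinset.1 hb
        exact card_crosses_le_two isPreconnected_connectedComponentIn hP hdisj
    _ = 2 * (connectedComponentIn F '' F).ncard := by
        rw [ncard_eq_toFinset_card _ hF, smul_eq_mul, mul_comm]

end CurveDomain

def Curve.reparam (γ : Curve X) (a : unitInterval → γ.dom.space) (ha : Continuous a) : Curve X :=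
  ⟨.interval, γ.toFun ∘ a, γ.continuous.comp ha⟩

section Length

variable (S : ι → Set X)

lemma Curve.len_eq (γ : Curve X) (ρ : ι → ℝ) :
    γ.len S ρ = ∑ j, if (γ.toFun ⁻¹' S j).Nonempty then ρ j else 0 := by
  simp only [Curve.len, ← image_univ, image_inter_nonempty_iff, univ_inter]

lemma Curve.len_reparam (γ : Curve X) (a : unitInterval → γ.dom.space) (ha : Continuous a)
    (ρ : ι → ℝ) :
    (γ.reparam a ha).len S ρ = ∑ j, if (range a ∩ γ.toFun ⁻¹' S j).Nonempty then ρ j else 0 := by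
  show (∑ j, if (range (γ.toFun ∘ a) ∩ S j).Nonempty then ρ j else 0) = _
  simp only [range_comp, image_inter_nonempty_iff]

lemma Curve.sum_len_reparam (γ : Curve X) {κ : Type*} [Fintype κ]
    (a : κ → unitInterval → γ.dom.space) (ha : ∀ k, Continuous (a k)) (ρ : ι → ℝ) :
    ∑ k, (γ.reparam (a k) (ha k)).len S ρ =
      ∑ j, (#{k | (range (a k) ∩ γ.toFun ⁻¹' S j).Nonempty} : ℝ) * ρ j := by
  simp only [γ.len_reparam]
  rw [Finset.sum_comm]
  simp only [Finset.sum_ite, Finset.sum_const_zero, add_zero, Finset.sum_const, nsmul_eq_mul]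

variable {S}

lemma Curve.len_le_sum_len_reparam (γ : Curve X) {κ : Type*} [Fintype κ]
    {a : κ → unitInterval → γ.dom.space} (ha : ∀ k, Continuous (a k))
    (hcover : ⋃ k, range (a k) = univ) {ρ : ι → ℝ} (hρ : ∀ j, 0 ≤ ρ j) :
    γ.len S ρ ≤ ∑ k, (γ.reparam (a k) (ha k)).len S ρ := by
  rw [γ.len_eq, γ.sum_len_reparam]
  refine Finset.sum_le_sum fun j _ => ?_
  split_ifs with h
  · obtain ⟨t, ht⟩ := h
    obtain ⟨k, hk⟩ := mem_iUnion.1 (hcover ▸ mem_univ t)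
    have hcard : (1 : ℝ) ≤ #{k | (range (a k) ∩ γ.toFun ⁻¹' S j).Nonempty} :=
      Nat.one_le_cast.2 (Finset.card_pos.2 ⟨k, Finset.mem_filter.2 ⟨Finset.mem_univ k, t, hk, ht⟩⟩)
    exact le_mul_of_one_le_left (hρ j) hcard
  · exact mul_nonneg (Nat.cast_nonneg _) (hρ j)

lemma Curve.sum_len_reparam_le (γ : Curve X) {κ : Type*} [Fintype κ]
    {a : κ → unitInterval → γ.dom.space} (ha : ∀ k, Continuous (a k)) {N : ℕ}
    (hN : ∀ j, #{k | (range (a k) ∩ γ.toFun ⁻¹' S j).Nonempty} ≤ N) {ρ : ι → ℝ}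
    (hρ : ∀ j, 0 ≤ ρ j) :
    ∑ k, (γ.reparam (a k) (ha k)).len S ρ ≤ N * γ.len S ρ := by
  rw [γ.len_eq, γ.sum_len_reparam, Finset.mul_sum]
  refine Finset.sum_le_sum fun j _ => ?_
  split_ifs with h
  · exact mul_le_mul_of_nonneg_right (by exact_mod_cast hN j) (hρ j)
  · simp [not_nonempty_iff_eq_empty.1 h]

end Length

namespace Subdivision

variable {c : WMCurve X} (D : Subdivision c) (S : ι → Set X)

lemma len_curve (ρ : ι → ℝ) :
    D.curve.len S ρ =
      ∑ i, c.w i * ∑ k, ((c.strand i).reparam (D.a i k) (D.cont i k)).len S ρ := by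
  show ∑ p : Σ i, Fin (D.m i),
      c.w p.1 * ((c.strand p.1).reparam (D.a p.1 p.2) (D.cont p.1 p.2)).len S ρ = _
  simp only [Fintype.sum_sigma, Finset.mul_sum]

variable {S}

lemma len_le_len_curve {ρ : ι → ℝ} (hρ : ∀ j, 0 ≤ ρ j) : c.len S ρ ≤ D.curve.len S ρ := by
  rw [D.len_curve]
  exact Finset.sum_le_sum fun i _ => mul_le_mul_of_nonneg_left
    ((c.strand i).len_le_sum_len_reparam (D.cont i) (D.covers i) hρ) (c.w_pos i).le

lemma len_curve_le
    (hno : ∀ (p : Σ i : c.ι, Fin (D.m i)) (j : ι),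
      ¬ Set.range ((c.strand p.1).toFun ∘ D.a p.1 p.2) ⊆ S j)
    (K : ℕ)
    (hK : ∀ (j : ι) (i : c.ι),
      (connectedComponentIn ((c.strand i).toFun ⁻¹' S j) '' ((c.strand i).toFun ⁻¹' S j)).Finite ∧
      (connectedComponentIn ((c.strand i).toFun ⁻¹' S j) '' ((c.strand i).toFun ⁻¹' S j)).ncard
        ≤ K)
    {ρ : ι → ℝ} (hρ : ∀ j, 0 ≤ ρ j) :
    D.curve.len S ρ ≤ 2 * K * c.len S ρ := by
  rw [D.len_curve, WMCurve.len, Finset.mul_sum]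
  refine Finset.sum_le_sum fun i _ => ?_
  rw [mul_left_comm]
  refine mul_le_mul_of_nonneg_left ?_ (c.w_pos i).le
  have hcount : ∀ j, #{k | (range (D.a i k) ∩ (c.strand i).toFun ⁻¹' S j).Nonempty} ≤ 2 * K :=
    fun j => (CurveDomain.card_inter_nonempty_le (hK j i).1
      (fun k => isPreconnected_range (D.cont i k)) (fun k k' h => (D.overlap i k k' h).1)
      fun k h => hno ⟨i, k⟩ j (by rw [range_comp]; exact image_subset_iff.2 h)).trans
      (Nat.mul_le_mul_left 2 (hK j i).2)
  exact_mod_cast (c.strand i).sum_len_reparam_le (D.cont i) hcount hρ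

end Subdivision

section Modulus

variable {S : ι → Set X} {q : ℝ}

lemma admissible_singleton_iff {c : WMCurve X} {ρ : ι → ℝ} :
    Admissible {c} S ρ ↔ (∀ j, 0 ≤ ρ j) ∧ 1 ≤ c.len S ρ := by
  simp [Admissible]

lemma bddBelow_volumes (Γ : Set (WMCurve X)) :
    BddBelow {V | ∃ ρ : ι → ℝ, Admissible Γ S ρ ∧ V = ∑ i, ρ i ^ q} :=
  ⟨0, by rintro _ ⟨ρ, hρ, rfl⟩; exact Finset.sum_nonneg fun j _ => Real.rpow_nonneg (hρ.1 j) q⟩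

lemma modulus_singleton_of_isEmpty (c : WMCurve X) [IsEmpty c.ι] : modulus q {c} S = 0 := by
  have : {V | ∃ ρ : ι → ℝ, Admissible {c} S ρ ∧ V = ∑ i, ρ i ^ q} = ∅ := by
    ext V
    simp [admissible_singleton_iff, WMCurve.len]
  rw [modulus, this, Real.sInf_empty]

lemma Curve.le_len_const (hS : ⋃ j, S j = univ) (γ : Curve X) {r : ℝ} (hr : 0 ≤ r) :
    r ≤ γ.len S fun _ => r := by
  obtain ⟨t⟩ : Nonempty γ.dom.space := inferInstance
  obtain ⟨j, hj⟩ := mem_iUnion.1 (hS ▸ mem_univ (γ.toFun t))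
  calc r = if (range γ.toFun ∩ S j).Nonempty then r else 0 := (if_pos ⟨_, ⟨t, rfl⟩, hj⟩).symm
    _ ≤ γ.len S fun _ => r :=
        Finset.single_le_sum (f := fun j => if (range γ.toFun ∩ S j).Nonempty then r else 0)
          (fun j _ => ite_nonneg hr le_rfl) (Finset.mem_univ j)

lemma exists_admissible_singleton (hS : ⋃ j, S j = univ) (c : WMCurve X) [Nonempty c.ι] :
    ∃ ρ, Admissible {c} S ρ := by
  set W := ∑ i, c.w i
  have hW : 0 < W := Finset.sum_pos (fun i _ => c.w_pos i) Finset.univ_nonempty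
  refine ⟨fun _ => W⁻¹, admissible_singleton_iff.2 ⟨fun _ => inv_nonneg.2 hW.le, ?_⟩⟩
  calc 1 = ∑ i, c.w i * W⁻¹ := by rw [← Finset.sum_mul, mul_inv_cancel₀ hW.ne']
    _ ≤ c.len S fun _ => W⁻¹ := Finset.sum_le_sum fun i _ => mul_le_mul_of_nonneg_left
        ((c.strand i).le_len_const hS (inv_nonneg.2 hW.le)) (c.w_pos i).le

lemma Admissible.singleton_of_len_le {c c' : WMCurve X} {ρ : ι → ℝ} (h : Admissible {c} S ρ)
    (hlen : c.len S ρ ≤ c'.len S ρ) : Admissible {c'} S ρ :=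
  admissible_singleton_iff.2 ⟨h.1, (admissible_singleton_iff.1 h).2.trans hlen⟩

lemma WMCurve.len_const_mul (c : WMCurve X) (L : ℝ) (ρ : ι → ℝ) :
    c.len S (fun j => L * ρ j) = L * c.len S ρ := by
  simp only [WMCurve.len, Curve.len, Finset.mul_sum, mul_ite, mul_zero, mul_left_comm L]

lemma modulus_singleton_le_of_len_le {c c' : WMCurve X} (hc : ∃ ρ, Admissible {c} S ρ)
    (hlen : ∀ ρ : ι → ℝ, (∀ j, 0 ≤ ρ j) → c.len S ρ ≤ c'.len S ρ) :
    modulus q {c'} S ≤ modulus q {c} S :=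
  let ⟨ρ, hρ⟩ := hc
  csInf_le_csInf (bddBelow_volumes _) ⟨_, ρ, hρ, rfl⟩
    fun _ ⟨ρ, hρ, hV⟩ => ⟨ρ, hρ.singleton_of_len_le (hlen ρ hρ.1), hV⟩

/-- An admissible metric for `c'`, scaled by `L`, is admissible for `c`. -/
lemma modulus_singleton_le_rpow_mul {c c' : WMCurve X} {L : ℝ} (hL : 0 ≤ L)
    (hc' : ∃ ρ, Admissible {c'} S ρ)
    (hlen : ∀ ρ : ι → ℝ, (∀ j, 0 ≤ ρ j) → c'.len S ρ ≤ L * c.len S ρ) :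
    modulus q {c} S ≤ L ^ q * modulus q {c'} S := by
  rw [modulus, modulus, ← smul_eq_mul, ← Real.sInf_smul_of_nonneg (Real.rpow_nonneg hL q)]
  obtain ⟨ρ₀, hρ₀⟩ := hc'
  refine le_csInf ⟨_, smul_mem_smul_set ⟨ρ₀, hρ₀, rfl⟩⟩ ?_
  rintro _ ⟨_, ⟨ρ, hρ, rfl⟩, rfl⟩
  refine csInf_le (bddBelow_volumes _) ⟨fun j => L * ρ j,
    admissible_singleton_iff.2 ⟨fun j => mul_nonneg hL (hρ.1 j), ?_⟩, ?_⟩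
  · rw [c.len_const_mul]
    exact (admissible_singleton_iff.1 hρ).2.trans (hlen ρ hρ.1)
  · simp only [smul_eq_mul, Finset.mul_sum]
    exact Finset.sum_congr rfl fun j _ => (Real.mul_rpow hL (hρ.1 j)).symm

end Modulus

theorem modulus_subdivision_general {X : Type*} [TopologicalSpace X] {ι : Type} [Fintype ι]
    (S : ι → Set X) (hS : (⋃ i, S i) = Set.univ) (q : ℝ)
    (c : WMCurve X) (D : Subdivision c) :
    modulus q {D.curve} S ≤ modulus q {c} S ∧
    ((∀ (p : Σ i : c.ι, Fin (D.m i)) (j : ι),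
        ¬ Set.range ((c.strand p.1).toFun ∘ D.a p.1 p.2) ⊆ S j) →
      ∀ K : ℕ,
        (∀ (j : ι) (i : c.ι),
          ((fun x => connectedComponentIn ((c.strand i).toFun ⁻¹' S j) x) ''
              ((c.strand i).toFun ⁻¹' S j)).Finite ∧
          ((fun x => connectedComponentIn ((c.strand i).toFun ⁻¹' S j) x) ''
              ((c.strand i).toFun ⁻¹' S j)).ncard ≤ K) →
        modulus q {c} S ≤ (2 * (K : ℝ)) ^ q * modulus q {D.curve} S) := by
  rcases isEmpty_or_nonempty c.ι with hc | hc
  · have : IsEmpty D.curve.ι := ⟨fun p => isEmptyElim p.1⟩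
    simp only [modulus_singleton_of_isEmpty, mul_zero, le_refl, implies_true, and_self]
  obtain ⟨ρ, hρ⟩ := exists_admissible_singleton hS c
  have hlen := fun σ => D.len_le_len_curve (S := S) (ρ := σ)
  exact ⟨modulus_singleton_le_of_len_le ⟨ρ, hρ⟩ hlen, fun hno K hK =>
    modulus_singleton_le_rpow_mul (by positivity) ⟨ρ, hρ.singleton_of_len_le (hlen ρ hρ.1)⟩
      fun σ hσ => D.len_curve_le hno K hK hσ⟩

/-- Subdivision: for a finite cover `S` of `X`, `q ≥ 1`, a weighted multi-curve
`c` on `X` and a subdivision `d` of `c`: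
(a) `mod_q(d, S) ≤ mod_q(c, S)`;
(b) if no piece of `d` has image contained in a single member of `S`, and each strand of `c`
meets each member of `S` in at most `K` connected components of the preimage, then
`mod_q(c, S) ≤ (2K)^q · mod_q(d, S)`. -/
theorem modulus_subdivision {X : Type*} [TopologicalSpace X] {ι : Type} [Fintype ι]
    (S : ι → Set X) (hS : (⋃ i, S i) = Set.univ) (q : ℝ) (hq : 1 ≤ q)
    (c : WMCurve X) (D : Subdivision c) :
    modulus q {D.curve} S ≤ modulus q {c} S ∧
    ((∀ (p : Σ i : c.ι, Fin (D.m i)) (j : ι),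
        ¬ Set.range ((c.strand p.1).toFun ∘ D.a p.1 p.2) ⊆ S j) →
      ∀ K : ℕ,
        (∀ (j : ι) (i : c.ι),
          ((fun x => connectedComponentIn ((c.strand i).toFun ⁻¹' S j) x) ''
              ((c.strand i).toFun ⁻¹' S j)).Finite ∧
          ((fun x => connectedComponentIn ((c.strand i).toFun ⁻¹' S j) x) ''
              ((c.strand i).toFun ⁻¹' S j)).ncard ≤ K) →
        modulus q {c} S ≤ (2 * (K : ℝ)) ^ q * modulus q {D.curve} S) :=
  modulus_subdivision_general S hS q c D
end
end

section
/- Let X be a topological space, let U and V be two finite covers of X (finite families of subsets whose unions are X) with K-bounded overlap, let q ≥ 1, and let Γ be any family of weighted multi-curves on X. Then K^{-(q+1)} · mod_q(Γ, V) ≤ mod_q(Γ, U) ≤ K^{q+1} · mod_q(Γ, V). -/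
open Set

noncomputable section

attribute [local instance] Classical.propDecidable

variable {X : Type*} [TopologicalSpace X] {ι : Type} [Fintype ι]

end

/-!
An admissible metric `ρ` for `V` induces the metric `σ u = ∑_{v meets u} ρ v` on `U`. A curve
meeting `v` meets some `u` that meets `v`, since `U` covers `X`, so `σ` is admissible. Each `σ u`
is a sum of at most `K` terms, whence `σ u ^ q ≤ K ^ q ∑_{v meets u} ρ v ^ q`, and each `v` is
counted for at most `K` members `u`; so `V_q(σ) ≤ K ^ (q + 1) V_q(ρ)`. Exchanging the covers gives
the other inequality.
-/

open Finset

theorem rpow_sum_le_card_rpow_mul_sum_rpow {α : Type*} {s : Finset α} {f : α → ℝ}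
    (hf : ∀ i ∈ s, 0 ≤ f i) {q : ℝ} (hq : 0 < q) :
    (∑ i ∈ s, f i) ^ q ≤ (#s : ℝ) ^ q * ∑ i ∈ s, f i ^ q := by
  rcases s.eq_empty_or_nonempty with rfl | hs
  · simp [Real.zero_rpow hq.ne']
  obtain ⟨m, hm, hmax⟩ := s.exists_max_image f hs
  calc (∑ i ∈ s, f i) ^ q ≤ (#s * f m) ^ q := by
        gcongr
        · exact sum_nonneg hf
        · simpa using sum_le_card_nsmul s f (f m) hmax
    _ = (#s : ℝ) ^ q * f m ^ q := Real.mul_rpow (Nat.cast_nonneg _) (hf m hm)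
    _ ≤ (#s : ℝ) ^ q * ∑ i ∈ s, f i ^ q := by
        gcongr
        exact single_le_sum (fun i hi => Real.rpow_nonneg (hf i hi) q) hm

variable {X : Type*} {ι κ : Type}

def OverlapAtMost (U : ι → Set X) (V : κ → Set X) (K : ℕ) : Prop :=
  (∀ i, {j | (U i ∩ V j).Nonempty}.ncard ≤ K) ∧ ∀ j, {i | (U i ∩ V j).Nonempty}.ncard ≤ K

theorem OverlapAtMost.symm {U : ι → Set X} {V : κ → Set X} {K : ℕ} (h : OverlapAtMost U V K) :
    OverlapAtMost V U K :=
  ⟨fun j => by simpa only [Set.inter_comm] using h.2 j,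
    fun i => by simpa only [Set.inter_comm] using h.1 i⟩

variable [Fintype ι] [Fintype κ]

open Classical in
noncomputable def transferMetric (U : ι → Set X) (V : κ → Set X) (ρ : κ → ℝ) (i : ι) : ℝ :=
  ∑ j with (U i ∩ V j).Nonempty, ρ j

theorem sum_transferMetric_rpow_le {U : ι → Set X} {V : κ → Set X} {K : ℕ}
    (h : OverlapAtMost U V K) {ρ : κ → ℝ} (hρ : ∀ j, 0 ≤ ρ j) {q : ℝ} (hq : 0 < q) :
    ∑ i, transferMetric U V ρ i ^ q ≤ (K : ℝ) ^ (q + 1) * ∑ j, ρ j ^ q := by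
  classical
  have hUV : ∀ i, #{j | (U i ∩ V j).Nonempty} ≤ K := fun i => by
    simpa [Set.ncard_eq_toFinset_card'] using h.1 i
  have hVU : ∀ j, #{i | (U i ∩ V j).Nonempty} ≤ K := fun j => by
    simpa [Set.ncard_eq_toFinset_card'] using h.2 j
  calc ∑ i, transferMetric U V ρ i ^ q
      ≤ ∑ i, (K : ℝ) ^ q * ∑ j with (U i ∩ V j).Nonempty, ρ j ^ q := by
        gcongr with i
        refine (rpow_sum_le_card_rpow_mul_sum_rpow (fun j _ => hρ j) hq).trans ?_
        gcongr
        · exact sum_nonneg fun j _ => Real.rpow_nonneg (hρ j) q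
        · exact_mod_cast hUV i
    _ = (K : ℝ) ^ q * ∑ j, #{i | (U i ∩ V j).Nonempty} * ρ j ^ q := by
        rw [← mul_sum, sum_comm' (t' := univ) (s' := fun j => {i | (U i ∩ V j).Nonempty})
          (by simp)]
        simp only [sum_const, nsmul_eq_mul]
    _ ≤ (K : ℝ) ^ q * ∑ j, K * ρ j ^ q := by
        gcongr with j
        · exact Real.rpow_nonneg (hρ j) q
        · exact_mod_cast hVU j
    _ = (K : ℝ) ^ (q + 1) * ∑ j, ρ j ^ q := by
        rw [← mul_sum, ← mul_assoc, Real.rpow_add_one' (Nat.cast_nonneg K) (by linarith)]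

variable [TopologicalSpace X]

theorem Curve.len_le_len_transferMetric {U : ι → Set X} {V : κ → Set X}
    (hU : ⋃ i, U i = Set.univ) {ρ : κ → ℝ} (hρ : ∀ j, 0 ≤ ρ j) (γ : Curve X) :
    γ.len V ρ ≤ γ.len U (transferMetric U V ρ) := by
  classical
  calc γ.len V ρ
      ≤ ∑ j, ∑ i, if (range γ.toFun ∩ U i).Nonempty ∧ (U i ∩ V j).Nonempty then ρ j else 0 := by
        refine sum_le_sum fun j _ => ?_
        have hterm : ∀ i,
            0 ≤ if (range γ.toFun ∩ U i).Nonempty ∧ (U i ∩ V j).Nonempty then ρ j else 0 :=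
          fun i => by split_ifs <;> simp [hρ j]
        split_ifs with hγV
        · obtain ⟨x, hxγ, hxV⟩ := hγV
          obtain ⟨i, hxU⟩ := mem_iUnion.mp (hU ▸ mem_univ x)
          calc ρ j = if (range γ.toFun ∩ U i).Nonempty ∧ (U i ∩ V j).Nonempty then ρ j else 0 :=
                (if_pos ⟨⟨x, hxγ, hxU⟩, x, hxU, hxV⟩).symm
            _ ≤ _ := single_le_sum (fun i _ => hterm i) (mem_univ i)
        · exact sum_nonneg fun i _ => hterm i
    _ = γ.len U (transferMetric U V ρ) := by
        rw [sum_comm]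
        simp only [Curve.len, transferMetric, ite_and, sum_filter, sum_ite_irrel, sum_const_zero]

theorem Admissible.transferMetric {U : ι → Set X} {V : κ → Set X} (hU : ⋃ i, U i = Set.univ)
    {Γ : Set (WMCurve X)} {ρ : κ → ℝ} (hρ : Admissible Γ V ρ) :
    Admissible Γ U (transferMetric U V ρ) :=
  ⟨fun _ => sum_nonneg fun j _ => hρ.1 j, fun c hc => (hρ.2 c hc).trans <|
    sum_le_sum fun k _ => mul_le_mul_of_nonneg_left
      ((c.strand k).len_le_len_transferMetric hU hρ.1) (c.w_pos k).le⟩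

theorem modulus_nonneg (q : ℝ) (Γ : Set (WMCurve X)) (S : ι → Set X) : 0 ≤ modulus q Γ S :=
  Real.sInf_nonneg <| by
    rintro _ ⟨ρ, hρ, rfl⟩
    exact sum_nonneg fun i _ => Real.rpow_nonneg (hρ.1 i) q

theorem modulus_le_sum_rpow {Γ : Set (WMCurve X)} {S : ι → Set X} {ρ : ι → ℝ}
    (hρ : Admissible Γ S ρ) (q : ℝ) : modulus q Γ S ≤ ∑ i, ρ i ^ q :=
  csInf_le ⟨0, by
    rintro _ ⟨σ, hσ, rfl⟩
    exact sum_nonneg fun i _ => Real.rpow_nonneg (hσ.1 i) q⟩ ⟨ρ, hρ, rfl⟩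

/-- `hST` is needed because `sInf ∅ = 0`: if no metric is admissible for `T`, then
`modulus q Γ T = 0`. -/
theorem modulus_le_mul_of_admissible_transfer {Γ : Set (WMCurve X)} {S : ι → Set X}
    {T : κ → Set X} {q C : ℝ} (hC : 0 ≤ C)
    (hTS : ∀ ρ, Admissible Γ T ρ → ∃ σ, Admissible Γ S σ ∧ ∑ i, σ i ^ q ≤ C * ∑ j, ρ j ^ q)
    (hST : ∀ σ, Admissible Γ S σ → ∃ ρ, Admissible Γ T ρ) :
    modulus q Γ S ≤ C * modulus q Γ T := by
  by_cases hT : ∃ ρ, Admissible Γ T ρ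
  · obtain ⟨ρ₀, hρ₀⟩ := hT
    unfold modulus
    rw [← smul_eq_mul, ← Real.sInf_smul_of_nonneg hC]
    refine le_csInf ⟨_, Set.smul_mem_smul_set ⟨ρ₀, hρ₀, rfl⟩⟩ ?_
    rintro _ ⟨_, ⟨ρ, hρ, rfl⟩, rfl⟩
    obtain ⟨σ, hσ, hvol⟩ := hTS ρ hρ
    exact (modulus_le_sum_rpow hσ q).trans hvol
  · have hS : {W | ∃ σ : ι → ℝ, Admissible Γ S σ ∧ W = ∑ i, σ i ^ q} = ∅ :=
      Set.eq_empty_of_forall_notMem fun _ ⟨σ, hσ, _⟩ => hT (hST σ hσ)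
    rw [modulus, hS, Real.sInf_empty]
    exact mul_nonneg hC (modulus_nonneg q Γ T)

theorem modulus_le_of_overlapAtMost {U : ι → Set X} {V : κ → Set X} (hU : ⋃ i, U i = Set.univ)
    (hV : ⋃ j, V j = Set.univ) {K : ℕ} (h : OverlapAtMost U V K) {q : ℝ} (hq : 0 < q)
    (Γ : Set (WMCurve X)) : modulus q Γ U ≤ (K : ℝ) ^ (q + 1) * modulus q Γ V :=
  modulus_le_mul_of_admissible_transfer (by positivity)
    (fun _ hρ => ⟨_, hρ.transferMetric hU, sum_transferMetric_rpow_le h hρ.1 hq⟩)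
    (fun _ hσ => ⟨_, hσ.transferMetric hV⟩)

/-- Bounded overlap: if two finite covers `U`, `V` of `X` have `K`-bounded
overlap, then for any `q ≥ 1` and any family `Γ` of weighted multi-curves on `X`,
`K^{-(q+1)} · mod_q(Γ, V) ≤ mod_q(Γ, U) ≤ K^{q+1} · mod_q(Γ, V)`. -/
theorem modulus_bounded_overlap {X : Type*} [TopologicalSpace X]
    {ι κ : Type} [Fintype ι] [Fintype κ]
    (U : ι → Set X) (V : κ → Set X)
    (hU : (⋃ i, U i) = Set.univ) (hV : (⋃ j, V j) = Set.univ)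
    (K : ℕ)
    (hUV : ∀ i, 1 ≤ {j : κ | (U i ∩ V j).Nonempty}.ncard ∧
      {j : κ | (U i ∩ V j).Nonempty}.ncard ≤ K)
    (hVU : ∀ j, 1 ≤ {i : ι | (U i ∩ V j).Nonempty}.ncard ∧
      {i : ι | (U i ∩ V j).Nonempty}.ncard ≤ K)
    (q : ℝ) (hq : 1 ≤ q) (Γ : Set (WMCurve X)) :
    ((K : ℝ) ^ (q + 1))⁻¹ * modulus q Γ V ≤ modulus q Γ U ∧
    modulus q Γ U ≤ (K : ℝ) ^ (q + 1) * modulus q Γ V := by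
  have h : OverlapAtMost U V K := ⟨fun i => (hUV i).2, fun j => (hVU j).2⟩
  have hq₀ : 0 < q := by linarith
  exact ⟨inv_mul_le_of_le_mul₀ (by positivity) (modulus_nonneg q Γ U)
      (modulus_le_of_overlapAtMost hV hU h.symm hq₀ Γ),
    modulus_le_of_overlapAtMost hU hV h hq₀ Γ⟩
end

section
/- For every integer n ≥ 2, the polynomial g_n(λ) = λ^{n+1} − 2λⁿ + 1 has exactly one root r_n in the open interval (1, 2), and this root satisfies r_n ≥ 2 − 2^{1−n}. -/
/-!
Write `g_n(x) = xⁿ (x - 2) + 1`. Its derivative `x^(n-1) ((n + 1) x - 2n)` shows that on `[1, ∞)`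
it decreases from `g_n(1) = 0` to its minimum at `c = 2n / (n + 1)` and increases afterwards,
with `g_n(2) = 1`. So a root in `(1, 2)` lies beyond `c`, where `g_n` is injective, and one
exists by the intermediate value theorem. For the bound, `l = 2 - 2^(1-n) = 2 (1 - 2⁻ⁿ)` lies
beyond `c` and `g_n(l) = 1 - 2 (1 - 2⁻ⁿ)ⁿ ≤ 0` by Bernoulli's inequality and `2n ≤ 2ⁿ`, so `l ≤ r`.
-/

open Set

theorem Nat.two_mul_le_two_pow (n : ℕ) : 2 * n ≤ 2 ^ n := by
  induction n with
  | zero => simp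
  | succ k ih =>
    have : 1 ≤ 2 ^ k := Nat.one_le_two_pow
    rw [pow_succ]
    omega

namespace GPoly

noncomputable def g (n : ℕ) (x : ℝ) : ℝ := x ^ (n + 1) - 2 * x ^ n + 1

noncomputable def crit (n : ℕ) : ℝ := 2 * n / (n + 1)

variable {n : ℕ}

theorem g_eq_pow_mul_add (n : ℕ) (x : ℝ) : g n x = x ^ n * (x - 2) + 1 := by
  rw [g, pow_succ]; ring

theorem g_one (n : ℕ) : g n 1 = 0 := by norm_num [g]

theorem g_two (n : ℕ) : g n 2 = 1 := by norm_num [g_eq_pow_mul_add]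

theorem continuous_g (n : ℕ) : Continuous (g n) := by unfold g; fun_prop

theorem hasDerivAt_g (hn : 0 < n) (x : ℝ) :
    HasDerivAt (g n) (x ^ (n - 1) * ((n + 1) * x - 2 * n)) x := by
  obtain ⟨m, rfl⟩ : ∃ m, n = m + 1 := ⟨n - 1, by omega⟩
  have h := ((hasDerivAt_pow (m + 2) x).sub ((hasDerivAt_pow (m + 1) x).const_mul 2)).add_const 1
  exact h.congr_deriv (by simp only [Nat.add_sub_cancel]; push_cast; ring)

theorem one_lt_crit (hn : 1 < n) : 1 < crit n := by
  have : (1 : ℝ) < n := by exact_mod_cast hn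
  rw [crit, lt_div_iff₀ (by positivity)]
  linarith

theorem crit_eq (n : ℕ) : crit n = 2 - 2 / (n + 1) := by
  rw [crit]; field_simp; ring

theorem crit_lt_two (n : ℕ) : crit n < 2 := by
  have : (0 : ℝ) < 2 / (n + 1) := by positivity
  rw [crit_eq]
  linarith

theorem strictAntiOn_g (hn : 0 < n) : StrictAntiOn (g n) (Icc 1 (crit n)) := by
  refine strictAntiOn_of_hasDerivWithinAt_neg (convex_Icc _ _) (continuous_g n).continuousOn
    (fun x _ ↦ (hasDerivAt_g hn x).hasDerivWithinAt) fun x hx ↦ ?_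
  rw [interior_Icc] at hx
  have hlt : (n + 1) * x < 2 * n := by
    have := hx.2; rwa [crit, lt_div_iff₀ (by positivity), mul_comm] at this
  exact mul_neg_of_pos_of_neg (pow_pos (by linarith [hx.1]) _) (by linarith)

theorem strictMonoOn_g (hn : 0 < n) : StrictMonoOn (g n) (Ici (crit n)) := by
  refine strictMonoOn_of_hasDerivWithinAt_pos (convex_Ici _) (continuous_g n).continuousOn
    (fun x _ ↦ (hasDerivAt_g hn x).hasDerivWithinAt) fun x hx ↦ ?_
  rw [interior_Ici] at hx
  have hlt : 2 * n < (n + 1) * x := by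
    have := hx.out; rw [crit, div_lt_iff₀ (by positivity)] at this; linarith
  have : (0 : ℝ) < x := lt_of_le_of_lt (by unfold crit; positivity) hx.out
  exact mul_pos (pow_pos this _) (by linarith)

theorem crit_lt_of_g_eq_zero (hn : 0 < n) {x : ℝ} (hx : 1 < x) (h : g n x = 0) : crit n < x := by
  by_contra! hxc
  have := strictAntiOn_g hn ⟨le_rfl, hx.le.trans hxc⟩ ⟨hx.le, hxc⟩ hx
  rw [g_one, h] at this
  exact this.false

theorem existsUnique_g_eq_zero (hn : 2 ≤ n) : ∃! r, r ∈ Ioo 1 2 ∧ g n r = 0 := by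
  have hn0 : 0 < n := by omega
  have hc : 1 < crit n := one_lt_crit hn
  have hgc : g n (crit n) < 0 := g_one n ▸ strictAntiOn_g hn0 ⟨le_rfl, hc.le⟩ ⟨hc.le, le_rfl⟩ hc
  obtain ⟨r, hr, hr0⟩ : ∃ r ∈ Ioo (crit n) 2, g n r = 0 :=
    intermediate_value_Ioo (crit_lt_two n).le (continuous_g n).continuousOn
      ⟨hgc, by rw [g_two]; exact one_pos⟩
  refine ⟨r, ⟨⟨hc.trans hr.1, hr.2⟩, hr0⟩, fun s ⟨hs, hs0⟩ ↦ ?_⟩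
  exact (strictMonoOn_g hn0).injOn (crit_lt_of_g_eq_zero hn0 hs.1 hs0).le hr.1.le
    (hs0.trans hr0.symm)

theorem half_le_one_sub_inv_two_pow_pow (n : ℕ) : (1 / 2 : ℝ) ≤ (1 - (2 ^ n)⁻¹) ^ n := by
  have hpos : (0 : ℝ) < 2 ^ n := by positivity
  have h2n : (2 * n : ℝ) ≤ 2 ^ n := by exact_mod_cast Nat.two_mul_le_two_pow n
  have hinv : (2 ^ n : ℝ)⁻¹ ≤ 1 := inv_le_one_of_one_le₀ (one_le_pow₀ one_le_two)
  have hbern := one_add_mul_le_pow (a := -(2 ^ n : ℝ)⁻¹) (by linarith) n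
  have : n * (2 ^ n : ℝ)⁻¹ ≤ 1 / 2 := by
    rw [← div_eq_mul_inv, div_le_div_iff₀ hpos two_pos]; linarith
  rw [← sub_eq_add_neg] at hbern
  linarith

theorem g_two_mul_one_sub_inv_two_pow_nonpos (n : ℕ) : g n (2 * (1 - (2 ^ n)⁻¹)) ≤ 0 := by
  have hpos : (2 : ℝ) ^ n ≠ 0 := by positivity
  have : g n (2 * (1 - (2 ^ n)⁻¹)) = 1 - 2 * (1 - (2 ^ n)⁻¹) ^ n := by
    rw [g_eq_pow_mul_add, mul_pow]; field_simp; ring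
  linarith [half_le_one_sub_inv_two_pow_pow n]

theorem crit_le_two_mul_one_sub_inv_two_pow (n : ℕ) : crit n ≤ 2 * (1 - (2 ^ n)⁻¹) := by
  have : (n + 1 : ℝ) ≤ 2 ^ n := by exact_mod_cast Nat.lt_two_pow_self
  rw [crit_eq, mul_sub, mul_one, ← div_eq_mul_inv]
  gcongr

theorem two_mul_one_sub_inv_two_pow_le_of_g_eq_zero (hn : 0 < n) {x : ℝ} (hx : 1 < x)
    (h : g n x = 0) : 2 * (1 - (2 ^ n)⁻¹) ≤ x :=
  ((strictMonoOn_g hn).le_iff_le (crit_le_two_mul_one_sub_inv_two_pow n)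
    (crit_lt_of_g_eq_zero hn hx h).le).1 (h ▸ g_two_mul_one_sub_inv_two_pow_nonpos n)

end GPoly

/-- For every integer `n ≥ 2`, the polynomial `g_n(λ) = λ^(n+1) − 2λ^n + 1` has exactly one
root `r_n` in the open interval `(1, 2)`, and this root satisfies `r_n ≥ 2 − 2^(1−n)`. -/
theorem unique_root_in_Ioo_and_lower_bound (n : ℕ) (hn : 2 ≤ n) :
    (∃! r : ℝ, r ∈ Set.Ioo (1 : ℝ) 2 ∧ r ^ (n + 1) - 2 * r ^ n + 1 = 0) ∧
    (∀ r : ℝ, r ∈ Set.Ioo (1 : ℝ) 2 → r ^ (n + 1) - 2 * r ^ n + 1 = 0 →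
      2 - 2 ^ (1 - (n : ℤ)) ≤ r) := by
  have hzpow : (2 : ℝ) - 2 ^ (1 - (n : ℤ)) = 2 * (1 - (2 ^ n)⁻¹) := by
    rw [zpow_sub₀ two_ne_zero, zpow_one, zpow_natCast]; ring
  refine ⟨GPoly.existsUnique_g_eq_zero hn, fun r hr hr0 ↦ ?_⟩
  rw [hzpow]
  exact GPoly.two_mul_one_sub_inv_two_pow_le_of_g_eq_zero (by omega) hr.1 hr0
end
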